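/- arXiv:0901.4617 — 8 statements merged into one kernel-verified Lean document; each statement's English description precedes it below -/
import Mathlib

section
/- Let (E,ℰ,π) be a probability space, Q a transition kernel with invariant measure π, and ξ : E → ℝ^d measurable. For 1 ≤ p' < p < ∞ define, for t ∈ ℝ^d, the operator Q(t)f(x) = ∫_E e^{i⟨t,ξ(y)⟩} f(y) Q(x,dy). Then for each fixed t ∈ ℝ^d, the operator norm of Q(t+h) − Q(t) from L^p(π) to L^{p'}(π) tends to 0 as h → 0. -/
/-!
Pointwise, `|Q(t+h)f - Q(t)f| ≤ Q(|e_{t+h} - e_t| |f|)` with `e_s = exp(i⟪s, ξ⟫)`. By Jensen in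
each fibre and the invariance of `π`, `Q` contracts `L^{p'}(π)`, so Hölder with
`1/p' = 1/r + 1/p` bounds the operator norm of `Q(t+h) - Q(t)` by `‖e_{t+h} - e_t‖_{L^r(π)}`.
Since `p' < p` gives `r < ∞`, this tends to `0` by dominated convergence, `|e_{t+h} - e_t| ≤ 2`.
-/

open MeasureTheory ProbabilityTheory Filter Topology
open scoped InnerProductSpace ENNReal

namespace MeasureTheory

variable {α β E : Type*} [MeasurableSpace α] [MeasurableSpace β]

theorem tendsto_eLpNorm_of_dominated_convergence [NormedAddCommGroup E] {μ : Measure α}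
    {r : ℝ≥0∞} {ι : Type*} {l : Filter ι} [l.IsCountablyGenerated] {F : ι → α → E}
    {bound : α → ℝ} (hr : r ≠ ∞) (hF_meas : ∀ᶠ i in l, AEStronglyMeasurable (F i) μ)
    (hbound : MemLp bound r μ) (h_bound : ∀ᶠ i in l, ∀ᵐ a ∂μ, ‖F i a‖ ≤ bound a)
    (h_lim : ∀ᵐ a ∂μ, Tendsto (fun i => F i a) l (𝓝 0)) :
    Tendsto (fun i => eLpNorm (F i) r μ) l (𝓝 0) := by
  rcases eq_or_ne r 0 with rfl | hr0
  · simpa using tendsto_const_nhds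
  have hs : 0 < r.toReal := ENNReal.toReal_pos hr0 hr
  have hlim : Tendsto (fun i => ∫⁻ a, ‖F i a‖ₑ ^ r.toReal ∂μ) l
      (𝓝 (∫⁻ _, 0 ∂μ)) := by
    refine tendsto_lintegral_filter_of_dominated_convergence' (fun a => ‖bound a‖ₑ ^ r.toReal)
      ?_ ?_ ?_ ?_
    · filter_upwards [hF_meas] with i hi
      exact hi.enorm.pow_const _
    · filter_upwards [h_bound] with i hi
      filter_upwards [hi] with a ha
      gcongr
      exact enorm_le_iff_norm_le.2 (ha.trans (Real.le_norm_self _))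
    · exact (lintegral_rpow_enorm_lt_top_of_eLpNorm_lt_top hr0 hr hbound.eLpNorm_lt_top).ne
    · filter_upwards [h_lim] with a ha
      have hc : Continuous fun x : E => ‖x‖ₑ ^ r.toReal :=
        (ENNReal.continuous_rpow_const (y := r.toReal)).comp continuous_enorm
      simpa [Function.comp_def, ENNReal.zero_rpow_of_pos hs] using (hc.tendsto 0).comp ha
  have hroot : Tendsto (fun x : ℝ≥0∞ => x ^ (1 / r.toReal)) (𝓝 0) (𝓝 0) := by
    simpa [ENNReal.zero_rpow_of_pos (inv_pos.2 hs)] using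
      (ENNReal.continuous_rpow_const (y := 1 / r.toReal)).tendsto 0
  rw [lintegral_zero] at hlim
  simp_rw [eLpNorm_eq_lintegral_rpow_enorm_toReal hr0 hr]
  exact hroot.comp hlim

theorem eLpNorm_lintegral_kernel_le (Q : Kernel α β) [IsMarkovKernel Q] (μ : Measure α)
    {g : β → ℝ≥0∞} (hg : Measurable g) {q : ℝ≥0∞} (hq1 : 1 ≤ q) (hq : q ≠ ∞) :
    eLpNorm (fun x => ∫⁻ y, g y ∂Q x) q μ ≤ eLpNorm g q (μ.bind Q) := by
  have hq0 : q ≠ 0 := (zero_lt_one.trans_le hq1).ne'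
  have hs : 0 < q.toReal := ENNReal.toReal_pos hq0 hq
  have jensen : ∀ x, (∫⁻ y, g y ∂Q x) ^ q.toReal ≤ ∫⁻ y, g y ^ q.toReal ∂Q x := by
    intro x
    have := eLpNorm_le_eLpNorm_of_exponent_le (μ := Q x) hq1 hg.aestronglyMeasurable
    rwa [eLpNorm_one_eq_lintegral_enorm, eLpNorm_eq_lintegral_rpow_enorm_toReal hq0 hq,
      one_div, ENNReal.le_rpow_inv_iff hs] at this
  simp only [eLpNorm_eq_lintegral_rpow_enorm_toReal hq0 hq, enorm_eq_self]
  rw [Measure.lintegral_bind Q.aemeasurable (hg.pow_const _).aemeasurable]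
  exact ENNReal.rpow_le_rpow (lintegral_mono jensen) (by positivity)

theorem integrable_mul_iff_of_norm_eq_one {𝕜 : Type*} [RCLike 𝕜] {μ : Measure β} {c f : β → 𝕜}
    (hc : ∀ y, ‖c y‖ = 1) (hc_meas : AEStronglyMeasurable c μ) (hf : AEStronglyMeasurable f μ) :
    Integrable (fun y => c y * f y) μ ↔ Integrable f μ := by
  have hnorm : ∀ y, ‖c y * f y‖ = ‖f y‖ := fun y => by rw [norm_mul, hc, one_mul]
  exact ⟨fun h => h.congr' hf (.of_forall hnorm),
    fun h => h.congr' (hc_meas.mul hf) (.of_forall fun y => (hnorm y).symm)⟩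

theorem enorm_integral_mul_sub_integral_mul_le {𝕜 : Type*} [RCLike 𝕜] {μ : Measure β}
    {a b f : β → 𝕜} (ha : ∀ y, ‖a y‖ = 1) (hb : ∀ y, ‖b y‖ = 1)
    (ha_meas : AEStronglyMeasurable a μ) (hb_meas : AEStronglyMeasurable b μ)
    (hf : AEStronglyMeasurable f μ) :
    ‖(∫ y, a y * f y ∂μ) - ∫ y, b y * f y ∂μ‖ₑ ≤ ∫⁻ y, ‖a y - b y‖ₑ * ‖f y‖ₑ ∂μ := by
  by_cases hfi : Integrable f μ
  · rw [← integral_sub ((integrable_mul_iff_of_norm_eq_one ha ha_meas hf).2 hfi)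
      ((integrable_mul_iff_of_norm_eq_one hb hb_meas hf).2 hfi)]
    refine (enorm_integral_le_lintegral_enorm _).trans_eq (lintegral_congr fun y => ?_)
    rw [← sub_mul, enorm_mul]
  · rw [integral_undef (mt (integrable_mul_iff_of_norm_eq_one ha ha_meas hf).1 hfi),
      integral_undef (mt (integrable_mul_iff_of_norm_eq_one hb hb_meas hf).1 hfi), sub_self,
      enorm_zero]
    exact zero_le

theorem eLpNorm_kernel_integral_mul_sub_le {𝕜 : Type*} [RCLike 𝕜] (Q : Kernel α β)
    [IsMarkovKernel Q] (μ : Measure α) {a b f : β → 𝕜} (ha : ∀ y, ‖a y‖ = 1)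
    (hb : ∀ y, ‖b y‖ = 1) (ha_meas : Measurable a) (hb_meas : Measurable b) (hf : Measurable f)
    {p q r : ℝ≥0∞} [ENNReal.HolderTriple r p q] (hq1 : 1 ≤ q) (hq : q ≠ ∞) :
    eLpNorm (fun x => (∫ y, a y * f y ∂Q x) - ∫ y, b y * f y ∂Q x) q μ ≤
      eLpNorm (fun y => a y - b y) r (μ.bind Q) * eLpNorm f p (μ.bind Q) :=
  calc _ ≤ eLpNorm (fun x => ∫⁻ y, ‖a y - b y‖ₑ * ‖f y‖ₑ ∂Q x) q μ :=
        eLpNorm_mono_enorm fun x => enorm_integral_mul_sub_integral_mul_le ha hb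
          ha_meas.aestronglyMeasurable hb_meas.aestronglyMeasurable hf.aestronglyMeasurable
    _ ≤ eLpNorm (fun y => ‖a y - b y‖ₑ * ‖f y‖ₑ) q (μ.bind Q) :=
        eLpNorm_lintegral_kernel_le Q μ (by fun_prop) hq1 hq
    _ = eLpNorm ((a - b) • f) q (μ.bind Q) := by
        rw [← eLpNorm_enorm ((a - b) • f)]
        simp only [smul_eq_mul, Pi.mul_apply, Pi.sub_apply, enorm_mul]
    _ ≤ _ := eLpNorm_smul_le_mul_eLpNorm hf.aestronglyMeasurable
        (ha_meas.sub hb_meas).aestronglyMeasurable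

theorem tendsto_eLpNorm_exp_inner_sub {V : Type*} [NormedAddCommGroup V]
    [InnerProductSpace ℝ V] [MeasurableSpace V] [OpensMeasurableSpace V] {μ : Measure α}
    [IsFiniteMeasure μ] {ξ : α → V} (hξ : Measurable ξ) {r : ℝ≥0∞} (hr : r ≠ ∞) (t : V) :
    Tendsto (fun h => eLpNorm (fun y => Complex.exp (Complex.I * (⟪t + h, ξ y⟫_ℝ : ℂ)) -
      Complex.exp (Complex.I * (⟪t, ξ y⟫_ℝ : ℂ))) r μ) (𝓝 0) (𝓝 0) := by
  have he_meas : ∀ s, Measurable fun y => Complex.exp (Complex.I * (⟪s, ξ y⟫_ℝ : ℂ)) :=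
    fun s => by fun_prop
  refine tendsto_eLpNorm_of_dominated_convergence (bound := fun _ => 2) hr
    (.of_forall fun h => ((he_meas _).sub (he_meas _)).aestronglyMeasurable) (memLp_const 2)
    (.of_forall fun h => .of_forall fun y => ?_) (.of_forall fun y => ?_)
  · refine (norm_sub_le _ _).trans_eq ?_
    rw [Complex.norm_exp_I_mul_ofReal, Complex.norm_exp_I_mul_ofReal]
    norm_num
  · have hc : Continuous fun h => Complex.exp (Complex.I * (⟪t + h, ξ y⟫_ℝ : ℂ)) -
        Complex.exp (Complex.I * (⟪t, ξ y⟫_ℝ : ℂ)) := by fun_prop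
    simpa using hc.tendsto 0

end MeasureTheory

theorem ENNReal.holderTriple_inv_tsub_inv {p q : ℝ≥0∞} (h : q ≤ p) :
    ENNReal.HolderTriple (q⁻¹ - p⁻¹)⁻¹ p q where
  inv_add_inv_eq_inv := by rw [inv_inv, tsub_add_cancel_of_le (ENNReal.inv_le_inv.2 h)]

theorem stmt2_general {E : Type*} [MeasurableSpace E] {d : ℕ}
    (Q : Kernel E E) [IsMarkovKernel Q]
    (π : Measure E) [IsProbabilityMeasure π]
    (hinv : π.bind (fun x => Q x) = π)
    (ξ : E → EuclideanSpace ℝ (Fin d)) (hξ : Measurable ξ)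
    (p p' : ℝ≥0∞) (hp'1 : 1 ≤ p') (hp'p : p' < p)
    (t : EuclideanSpace ℝ (Fin d)) :
    Tendsto
      (fun h : EuclideanSpace ℝ (Fin d) =>
        ⨆ (f : E → ℂ) (_ : Measurable f) (_ : eLpNorm f p π ≤ 1),
          eLpNorm
            (fun x =>
              (∫ y, Complex.exp (Complex.I * (⟪t + h, ξ y⟫_ℝ : ℂ)) * f y ∂(Q x)) -
              (∫ y, Complex.exp (Complex.I * (⟪t, ξ y⟫_ℝ : ℂ)) * f y ∂(Q x)))
            p' π)
      (nhds 0) (nhds 0) := by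
  have := ENNReal.holderTriple_inv_tsub_inv hp'p.le
  have hr : (p'⁻¹ - p⁻¹)⁻¹ ≠ ∞ :=
    ENNReal.inv_ne_top.2 (tsub_pos_of_lt (ENNReal.inv_lt_inv.2 hp'p)).ne'
  have he_meas : ∀ s : EuclideanSpace ℝ (Fin d),
      Measurable fun y => Complex.exp (Complex.I * (⟪s, ξ y⟫_ℝ : ℂ)) := fun s => by fun_prop
  refine tendsto_of_tendsto_of_tendsto_of_le_of_le tendsto_const_nhds
    (tendsto_eLpNorm_exp_inner_sub (μ := π) hξ hr t) (fun _ => zero_le)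
    fun h => iSup₂_le fun f hf => iSup_le fun hfp => ?_
  calc _ ≤ eLpNorm (fun y => Complex.exp (Complex.I * (⟪t + h, ξ y⟫_ℝ : ℂ)) -
          Complex.exp (Complex.I * (⟪t, ξ y⟫_ℝ : ℂ))) (p'⁻¹ - p⁻¹)⁻¹ π * eLpNorm f p π := by
        simpa only [hinv] using eLpNorm_kernel_integral_mul_sub_le Q π
          (fun _ => Complex.norm_exp_I_mul_ofReal _) (fun _ => Complex.norm_exp_I_mul_ofReal _)
          (he_meas _) (he_meas _) hf hp'1 hp'p.ne_top
    _ ≤ _ := mul_le_of_le_one_right' hfp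

/-- For `1 ≤ p' < p < ∞`, the Fourier kernels `Q(t)f(x) = ∫ e^{i⟨t,ξ(y)⟩} f(y) Q(x,dy)`
satisfy `‖Q(t+h) − Q(t)‖_{L^p(π) → L^{p'}(π)} → 0` as `h → 0`, for each fixed `t`. -/
theorem stmt2 {E : Type*} [MeasurableSpace E] {d : ℕ}
    (Q : Kernel E E) [IsMarkovKernel Q]
    (π : Measure E) [IsProbabilityMeasure π]
    (hinv : π.bind (fun x => Q x) = π)
    (ξ : E → EuclideanSpace ℝ (Fin d)) (hξ : Measurable ξ)
    (p p' : ℝ≥0∞) (hp'1 : 1 ≤ p') (hp'p : p' < p) (hp : p < ∞)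
    (t : EuclideanSpace ℝ (Fin d)) :
    Tendsto
      (fun h : EuclideanSpace ℝ (Fin d) =>
        ⨆ (f : E → ℂ) (_ : Measurable f) (_ : eLpNorm f p π ≤ 1),
          eLpNorm
            (fun x =>
              (∫ y, Complex.exp (Complex.I * (⟪t + h, ξ y⟫_ℝ : ℂ)) * f y ∂(Q x)) -
              (∫ y, Complex.exp (Complex.I * (⟪t, ξ y⟫_ℝ : ℂ)) * f y ∂(Q x)))
            p' π)
      (nhds 0) (nhds 0) :=
  stmt2_general Q π hinv ξ hξ p p' hp'1 hp'p t
end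

section
/- Let Q be a Markov kernel on (E,ℰ) with invariant probability π, and suppose there exist ℓ ≥ 1, η > 0, ρ < 1 such that π(A) ≤ η implies Q^ℓ(x,A) ≤ ρ^ℓ for all x ∈ E (Doeblin condition). Suppose Q^ℓ(x,dy) = α(x,y) dπ(y) + S(x,dy) where α is nonnegative, bounded, measurable and S is a positive kernel with S(x,A) = Q^ℓ(x, A ∩ (C_x ∪ L_x)) where π(C_x ∪ L_x) ≤ η for every x. Then for 1 < p < ∞ and q the conjugate exponent, the operator S acting on L^p(π) by Sf(x) = ∫ f(y) S(x,dy) satisfies ‖S‖_{L^p(π)→L^p(π)} ≤ ρ^{ℓ/q}. -/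
/-!
Hölder's inequality for the probability `Q^ℓ(x, ·)` on the set `D x` gives
`|Sf(x)| ≤ Q^ℓ(x, D x)^{1/q} (Q^ℓ |f|^p (x))^{1/p}`, and the Doeblin condition bounds the first
factor by `ρ^{ℓ/q}` because `π(D x) ≤ η`. Raising to the power `p`, integrating against `π` and
using the invariance `π Q^ℓ = π` turns `∫ Q^ℓ |f|^p dπ` into `‖f‖_p^p`.
-/

open MeasureTheory ProbabilityTheory
open scoped ENNReal

namespace MeasureTheory

variable {α : Type*} [MeasurableSpace α]

theorem enorm_setIntegral_le_measure_rpow_mul_eLpNorm {G : Type*} [NormedAddCommGroup G]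
    [NormedSpace ℝ G] {μ : Measure α} {s : Set α} {f : α → G} (hf : AEStronglyMeasurable f μ)
    {p q : ℝ} (hpq : p.HolderConjugate q) :
    ‖∫ y in s, f y ∂μ‖ₑ ≤ μ s ^ q⁻¹ * eLpNorm f (ENNReal.ofReal p) μ := by
  have hholder := eLpNorm_le_eLpNorm_mul_rpow_measure_univ (μ := μ.restrict s)
    (ENNReal.one_le_ofReal.mpr hpq.lt.le) hf.restrict
  rw [ENNReal.toReal_one, ENNReal.toReal_ofReal hpq.nonneg, div_one, one_div p, hpq.one_sub_inv,
    Measure.restrict_apply_univ, eLpNorm_one_eq_lintegral_enorm] at hholder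
  calc ‖∫ y in s, f y ∂μ‖ₑ ≤ ∫⁻ y in s, ‖f y‖ₑ ∂μ := enorm_integral_le_lintegral_enorm f
    _ ≤ eLpNorm f (ENNReal.ofReal p) (μ.restrict s) * μ s ^ q⁻¹ := hholder
    _ ≤ μ s ^ q⁻¹ * eLpNorm f (ENNReal.ofReal p) μ := by
        rw [mul_comm]
        gcongr
        exact Measure.restrict_le_self

theorem lintegral_lintegral_kernel_of_bind_eq_self {κ : Kernel α α} {π : Measure α}
    (hκπ : π.bind κ = π) {g : α → ℝ≥0∞} (hg : Measurable g) :
    ∫⁻ x, ∫⁻ y, g y ∂κ x ∂π = ∫⁻ y, g y ∂π := by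
  conv_rhs => rw [← hκπ]
  exact (Measure.lintegral_bind κ.measurable.aemeasurable hg.aemeasurable).symm

theorem eLpNorm_le_mul_of_bind_eq_self {G H : Type*} [NormedAddCommGroup G] [NormedAddCommGroup H]
    {κ : Kernel α α} {π : Measure α} (hκπ : π.bind κ = π) {p : ℝ≥0∞} (hp0 : p ≠ 0)
    (hp : p ≠ ∞) {f : α → G} (hf : StronglyMeasurable f) {F : α → H} {C : ℝ≥0∞}
    (hF : ∀ x, ‖F x‖ₑ ≤ C * eLpNorm f p (κ x)) :
    eLpNorm F p π ≤ C * eLpNorm f p π := by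
  have hp' : 0 < p.toReal := ENNReal.toReal_pos hp0 hp
  have hfp : Measurable fun y => ‖f y‖ₑ ^ p.toReal := hf.enorm.pow_const _
  have hF' : ∀ x, ‖F x‖ₑ ^ p.toReal ≤ C ^ p.toReal * ∫⁻ y, ‖f y‖ₑ ^ p.toReal ∂κ x := fun x => by
    rw [lintegral_rpow_enorm_eq_rpow_eLpNorm' hp', ← eLpNorm_eq_eLpNorm' hp0 hp,
      ← ENNReal.mul_rpow_of_nonneg _ _ hp'.le]
    exact ENNReal.rpow_le_rpow (hF x) hp'.le
  rw [← ENNReal.rpow_le_rpow_iff hp', ENNReal.mul_rpow_of_nonneg _ _ hp'.le,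
    eLpNorm_eq_eLpNorm' hp0 hp, eLpNorm_eq_eLpNorm' hp0 hp,
    ← lintegral_rpow_enorm_eq_rpow_eLpNorm' hp', ← lintegral_rpow_enorm_eq_rpow_eLpNorm' hp']
  calc ∫⁻ x, ‖F x‖ₑ ^ p.toReal ∂π
      ≤ ∫⁻ x, C ^ p.toReal * ∫⁻ y, ‖f y‖ₑ ^ p.toReal ∂κ x ∂π := lintegral_mono hF'
    _ = C ^ p.toReal * ∫⁻ y, ‖f y‖ₑ ^ p.toReal ∂π := by
        rw [lintegral_const_mul _ (hfp.lintegral_kernel (κ := κ)),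
          lintegral_lintegral_kernel_of_bind_eq_self hκπ hfp]

end MeasureTheory

theorem stmt3_general {E : Type*} [MeasurableSpace E]
    (Qℓ : Kernel E E)
    (π : Measure E)
    (hinv : π.bind (fun x => Qℓ x) = π)
    (ℓ : ℕ) (η ρ : ℝ) (hρ0 : 0 ≤ ρ)
    -- Doeblin condition
    (hDoeblin : ∀ A : Set E, MeasurableSet A → π A ≤ ENNReal.ofReal η →
      ∀ x : E, Qℓ x A ≤ ENNReal.ofReal (ρ ^ ℓ))
    -- the sets `D x = C_x ∪ L_x`
    (D : E → Set E) (hD : MeasurableSet {p : E × E | p.2 ∈ D p.1})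
    (hDsmall : ∀ x, π (D x) ≤ ENNReal.ofReal η)
    (p q : ℝ) (hp : 1 < p) (hpq : 1 / p + 1 / q = 1)
    (f : E → ℂ) (hf : Measurable f) :
    eLpNorm (fun x => ∫ y in D x, f y ∂(Qℓ x)) (ENNReal.ofReal p) π ≤
      ENNReal.ofReal (ρ ^ ((ℓ : ℝ) / q)) * eLpNorm f (ENNReal.ofReal p) π := by
  have hpq' : p.HolderConjugate q :=
    Real.holderConjugate_iff.mpr ⟨hp, by simpa only [one_div] using hpq⟩
  refine eLpNorm_le_mul_of_bind_eq_self hinv (by simpa using hpq'.pos) ENNReal.ofReal_ne_top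
    hf.stronglyMeasurable fun x => ?_
  have hDx : MeasurableSet (D x) := hD.preimage measurable_prodMk_left
  calc ‖∫ y in D x, f y ∂(Qℓ x)‖ₑ
      ≤ Qℓ x (D x) ^ q⁻¹ * eLpNorm f (ENNReal.ofReal p) (Qℓ x) :=
        enorm_setIntegral_le_measure_rpow_mul_eLpNorm hf.aestronglyMeasurable hpq'
    _ ≤ ENNReal.ofReal (ρ ^ ℓ) ^ q⁻¹ * eLpNorm f (ENNReal.ofReal p) (Qℓ x) := by
        gcongr
        exacts [inv_nonneg.mpr hpq'.symm.nonneg, hDoeblin _ hDx (hDsmall x) x]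
    _ = ENNReal.ofReal (ρ ^ ((ℓ : ℝ) / q)) * eLpNorm f (ENNReal.ofReal p) (Qℓ x) := by
        rw [ENNReal.ofReal_rpow_of_nonneg (by positivity) (inv_nonneg.mpr hpq'.symm.nonneg),
          ← Real.rpow_natCast, ← Real.rpow_mul hρ0, div_eq_mul_inv]

/-- Under the Doeblin condition, the kernel `S(x,A) = Q^ℓ(x, A ∩ (C_x ∪ L_x))`
(coming from the decomposition `Q^ℓ(x,dy) = α(x,y) dπ(y) + S(x,dy)` with
`π(C_x ∪ L_x) ≤ η`) acts on `L^p(π)` with operator norm at most `ρ^{ℓ/q}`,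
`q` being the conjugate exponent of `p`.  Here this is stated as the bound
`‖Sf‖_p ≤ ρ^{ℓ/q} ‖f‖_p` for every measurable `f`. -/
theorem stmt3 {E : Type*} [MeasurableSpace E]
    (Qℓ : Kernel E E) [IsMarkovKernel Qℓ]
    (π : Measure E) [IsProbabilityMeasure π]
    (hinv : π.bind (fun x => Qℓ x) = π)
    (ℓ : ℕ) (hℓ : 1 ≤ ℓ) (η ρ : ℝ) (hη : 0 < η) (hρ0 : 0 ≤ ρ) (hρ1 : ρ < 1)
    -- Doeblin condition
    (hDoeblin : ∀ A : Set E, MeasurableSet A → π A ≤ ENNReal.ofReal η →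
      ∀ x : E, Qℓ x A ≤ ENNReal.ofReal (ρ ^ ℓ))
    -- the sets `D x = C_x ∪ L_x`
    (D : E → Set E) (hD : MeasurableSet {p : E × E | p.2 ∈ D p.1})
    (hDsmall : ∀ x, π (D x) ≤ ENNReal.ofReal η)
    -- the decomposition `Q^ℓ(x,dy) = α(x,y) dπ(y) + S(x,dy)`
    (α : E → E → ℝ) (hαmeas : Measurable (Function.uncurry α))
    (hαpos : ∀ x y, 0 ≤ α x y) (hαbdd : ∃ M : ℝ, ∀ x y, α x y ≤ M)
    (hdec : ∀ x : E, ∀ A : Set E, MeasurableSet A →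
      (Qℓ x A).toReal = (∫ y in A, α x y ∂π) + (Qℓ x (A ∩ D x)).toReal)
    (p q : ℝ) (hp : 1 < p) (hpq : 1 / p + 1 / q = 1)
    (f : E → ℂ) (hf : Measurable f) :
    eLpNorm (fun x => ∫ y in D x, f y ∂(Qℓ x)) (ENNReal.ofReal p) π ≤
      ENNReal.ofReal (ρ ^ ((ℓ : ℝ) / q)) * eLpNorm f (ENNReal.ofReal p) π :=
  stmt3_general Qℓ π hinv ℓ η ρ hρ0 hDoeblin D hD hDsmall p q hp hpq f hf
end

section
/- Let a ∈ (−1,1), a ≠ 0, let p be a probability density on ℝ with finite second moment, and let Q be the transition operator Qf(x) = ∫_ℝ f(ax+y) p(y) dy of the autoregressive chain Xₙ = aX_{n−1} + θₙ. Let v(x) = 1 + x², ξ(x) = x, and Q(t)f(x) = ∫_ℝ e^{it(ax+y)} f(ax+y) p(y) dy. Then the operator norm ‖Q(t) − Q‖ on the weighted supremum space B_v = {f : sup_x |f(x)|/(1+x²) < ∞} does not converge to 0 as t → 0. More precisely, for g(x) = x², sup_{x∈ℝ} (1+x²)^{-1} |Q(t)g(x) − Qg(x)| does not tend to 0 as t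 → 0, since at x = π/(at) its value is at least (a²π²/(π² + a²t²)) |p̂(t) + 1| minus a term tending to 0, which converges to 2a² ≠ 0. -/
/-!
At `x = π / (a t)` the phase `e^{i a t x}` equals `-1`, so `Q(t)g(x) ≈ -Qg(x)` and the difference
is about `-2 a² x²`, whose weighted size stays near `2 a²` as `t → 0`. Quantitatively, writing
`c = a x`, the difference is `-(c² (p̂(t) + 1) + ∫ (e^{ity} + 1)(2cy + y²) p(y) dy)`; the first
term is at least `c² (2 - |t| E|Y|)` because `|e^{iu} - 1| ≤ |u|`, and the second is
`O(|c| E|Y| + E Y²)`.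
-/

open MeasureTheory Complex

theorem norm_exp_I_mul_ofReal_add_one_le (x : ℝ) : ‖exp (I * x) + 1‖ ≤ 2 := by
  simpa [norm_exp_I_mul_ofReal, one_add_one_eq_two] using norm_add_le (exp (I * x)) 1

theorem exp_I_mul_ofReal_mul_add_of_mul_eq_pi {t c : ℝ} (htc : t * c = Real.pi) (y : ℝ) :
    exp (I * ((t * (c + y) : ℝ) : ℂ)) = -exp (I * ((t * y : ℝ) : ℂ)) := by
  rw [← exp_add_pi_mul_I, mul_add, htc]
  push_cast
  ring_nf

section

variable {p : ℝ → ℝ}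

theorem integrable_abs_mul_of_integrable_sq_mul (hp : Integrable p)
    (hp₂ : Integrable fun y => y ^ 2 * p y) : Integrable fun y => |y| * p y := by
  refine ((hp.norm.add hp₂.norm).div_const 2).mono' (by fun_prop) (.of_forall fun y => ?_)
  simp only [Pi.add_apply, norm_mul, norm_pow, Real.norm_eq_abs, abs_abs]
  nlinarith [mul_nonneg (sq_nonneg (|y| - 1)) (abs_nonneg (p y)), sq_abs y]

theorem norm_integral_exp_I_mul_sub_one_mul_le (hp₀ : ∀ y, 0 ≤ p y)
    (hp₁ : Integrable fun y => |y| * p y) (t : ℝ) :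
    ‖∫ y, (exp (I * ((t * y : ℝ) : ℂ)) - 1) * (p y : ℂ)‖ ≤ |t| * ∫ y, |y| * p y := by
  rw [← integral_const_mul]
  refine norm_integral_le_of_norm_le (hp₁.const_mul _) (.of_forall fun y => ?_)
  rw [norm_mul, norm_real, Real.norm_of_nonneg (hp₀ y), ← mul_assoc, ← abs_mul]
  exact mul_le_mul_of_nonneg_right Real.norm_exp_I_mul_ofReal_sub_one_le (hp₀ y)

theorem two_sub_le_norm_integral_exp_I_mul_add_one_mul (hp₀ : ∀ y, 0 ≤ p y)
    (hp : Integrable p) (hp_one : ∫ y, p y = 1) (hp₁ : Integrable fun y => |y| * p y)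
    (t : ℝ) :
    2 - |t| * ∫ y, |y| * p y ≤ ‖∫ y, (exp (I * ((t * y : ℝ) : ℂ)) + 1) * (p y : ℂ)‖ := by
  have hpC : Integrable fun y => (p y : ℂ) := hp.ofReal
  have hA : Integrable fun y => (exp (I * ((t * y : ℝ) : ℂ)) + 1) * (p y : ℂ) :=
    hpC.bdd_mul (by fun_prop) (.of_forall fun y => norm_exp_I_mul_ofReal_add_one_le _)
  have h_two : ∫ y, (2 : ℂ) * p y = 2 := by
    rw [integral_const_mul, integral_complex_ofReal, hp_one]
    norm_num
  have h_sub : (∫ y, (exp (I * ((t * y : ℝ) : ℂ)) + 1) * (p y : ℂ)) - 2 =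
      ∫ y, (exp (I * ((t * y : ℝ) : ℂ)) - 1) * (p y : ℂ) := by
    have h2 : Integrable fun y => (2 : ℂ) * p y := hpC.const_mul 2
    rw [← h_two, ← integral_sub hA h2]
    congr 1 with y
    ring
  calc 2 - |t| * ∫ y, |y| * p y
      ≤ ‖(2 : ℂ)‖ - ‖(∫ y, (exp (I * ((t * y : ℝ) : ℂ)) + 1) * (p y : ℂ)) - 2‖ := by
        rw [h_sub, norm_ofNat]
        linarith [norm_integral_exp_I_mul_sub_one_mul_le hp₀ hp₁ t]
    _ ≤ _ := by
        linarith [norm_le_norm_add_norm_sub' (2 : ℂ)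
          (∫ y, (exp (I * ((t * y : ℝ) : ℂ)) + 1) * (p y : ℂ)), norm_sub_rev (2 : ℂ)
          (∫ y, (exp (I * ((t * y : ℝ) : ℂ)) + 1) * (p y : ℂ))]

theorem abs_two_mul_mul_add_sq_mul_le (c y q : ℝ) (hq : 0 ≤ q) :
    |(2 * c * y + y ^ 2) * q| ≤ 2 * |c| * (|y| * q) + y ^ 2 * q := by
  have h_abs : |2 * c * y + y ^ 2| ≤ 2 * |c| * |y| + y ^ 2 := by
    refine (abs_add_le _ _).trans_eq ?_
    rw [abs_mul, abs_mul, abs_two, abs_sq]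
  rw [abs_mul, abs_of_nonneg hq]
  nlinarith [mul_le_mul_of_nonneg_right h_abs hq]

theorem integrable_two_mul_mul_add_sq_mul (hp₀ : ∀ y, 0 ≤ p y) (hp : Integrable p)
    (hp₁ : Integrable fun y => |y| * p y) (hp₂ : Integrable fun y => y ^ 2 * p y) (c : ℝ) :
    Integrable fun y => (2 * c * y + y ^ 2) * p y := by
  have := hp.aestronglyMeasurable
  exact ((hp₁.const_mul (2 * |c|)).add hp₂).mono' (by fun_prop)
    (.of_forall fun y => abs_two_mul_mul_add_sq_mul_le c y (p y) (hp₀ y))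

theorem norm_integral_exp_I_mul_add_one_mul_le (hp₀ : ∀ y, 0 ≤ p y)
    (hp₁ : Integrable fun y => |y| * p y) (hp₂ : Integrable fun y => y ^ 2 * p y) (t c : ℝ) :
    ‖∫ y, (exp (I * ((t * y : ℝ) : ℂ)) + 1) * (((2 * c * y + y ^ 2) * p y : ℝ) : ℂ)‖ ≤
      4 * |c| * (∫ y, |y| * p y) + 2 * ∫ y, y ^ 2 * p y := by
  have h_bound : Integrable fun y => 2 * |c| * (|y| * p y) + y ^ 2 * p y :=
    (hp₁.const_mul _).add hp₂
  refine (norm_integral_le_of_norm_le (h_bound.const_mul 2) (.of_forall fun y => ?_)).trans_eq ?_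
  · rw [norm_mul, norm_real, Real.norm_eq_abs]
    exact mul_le_mul (norm_exp_I_mul_ofReal_add_one_le _)
      (abs_two_mul_mul_add_sq_mul_le c y (p y) (hp₀ y)) (abs_nonneg _) zero_le_two
  · rw [integral_const_mul, integral_add (hp₁.const_mul _) hp₂, integral_const_mul]
    ring

theorem integral_exp_I_mul_sq_sub_integral_sq_of_mul_eq_pi (hp : Integrable p)
    {t c : ℝ} (hr : Integrable fun y => (2 * c * y + y ^ 2) * p y) (htc : t * c = Real.pi) :
    (∫ y : ℝ, exp (I * ((t * (c + y) : ℝ) : ℂ)) * (((c + y : ℝ) : ℂ)) ^ 2 * ((p y : ℝ) : ℂ)) -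
        ((∫ y : ℝ, (c + y) ^ 2 * p y : ℝ) : ℂ) =
      -(((c ^ 2 : ℝ) : ℂ) * (∫ y, (exp (I * ((t * y : ℝ) : ℂ)) + 1) * (p y : ℂ)) +
        ∫ y, (exp (I * ((t * y : ℝ) : ℂ)) + 1) * (((2 * c * y + y ^ 2) * p y : ℝ) : ℂ)) := by
  set e : ℝ → ℂ := fun y => exp (I * ((t * y : ℝ) : ℂ)) with he_def
  have he : ∀ y, ‖e y + 1‖ ≤ 2 := fun y => norm_exp_I_mul_ofReal_add_one_le _
  have hq : Integrable fun y => (c + y) ^ 2 * p y :=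
    ((hp.const_mul (c ^ 2)).add hr).congr (.of_forall fun y => by simp only [Pi.add_apply]; ring)
  have hqC : Integrable fun y => (((c + y) ^ 2 * p y : ℝ) : ℂ) := hq.ofReal
  have hA : Integrable fun y => (e y + 1) * (p y : ℂ) :=
    hp.ofReal.bdd_mul (by fun_prop) (.of_forall he)
  have hB : Integrable fun y => (e y + 1) * (((2 * c * y + y ^ 2) * p y : ℝ) : ℂ) :=
    hr.ofReal.bdd_mul (by fun_prop) (.of_forall he)
  have h_neg : Integrable fun y => -e y * (((c + y) ^ 2 * p y : ℝ) : ℂ) :=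
    hqC.bdd_mul (by fun_prop)
      (.of_forall fun y => (norm_neg (e y)).trans_le (norm_exp_I_mul_ofReal _).le)
  rw [← integral_complex_ofReal, ← integral_const_mul, ← integral_add (hA.const_mul _) hB,
    ← integral_neg, integral_congr_ae (g := fun y => -e y * (((c + y) ^ 2 * p y : ℝ) : ℂ))
      (.of_forall fun y => by
        simp only [exp_I_mul_ofReal_mul_add_of_mul_eq_pi htc, he_def]; push_cast; ring),
    ← integral_sub h_neg hqC]
  congr 1 with y
  push_cast
  ring

theorem le_norm_integral_exp_I_mul_sq_sub_integral_sq (hp₀ : ∀ y, 0 ≤ p y)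
    (hp : Integrable p) (hp_one : ∫ y, p y = 1) (hp₂ : Integrable fun y => y ^ 2 * p y)
    {t c : ℝ} (htc : t * c = Real.pi) :
    c ^ 2 * (2 - |t| * ∫ y, |y| * p y) - (4 * |c| * (∫ y, |y| * p y) + 2 * ∫ y, y ^ 2 * p y)
      ≤ ‖(∫ y : ℝ, exp (I * ((t * (c + y) : ℝ) : ℂ)) *
              (((c + y : ℝ) : ℂ)) ^ 2 * ((p y : ℝ) : ℂ)) -
          ((∫ y : ℝ, (c + y) ^ 2 * p y : ℝ) : ℂ)‖ := by
  have hp₁ := integrable_abs_mul_of_integrable_sq_mul hp hp₂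
  rw [integral_exp_I_mul_sq_sub_integral_sq_of_mul_eq_pi hp
    (integrable_two_mul_mul_add_sq_mul hp₀ hp hp₁ hp₂ c) htc, norm_neg]
  refine le_trans ?_ (norm_sub_le_norm_add _ _)
  rw [norm_mul, norm_real, Real.norm_of_nonneg (sq_nonneg c)]
  have := sq_nonneg c
  gcongr
  · exact two_sub_le_norm_integral_exp_I_mul_add_one_mul hp₀ hp hp_one hp₁ t
  · exact norm_integral_exp_I_mul_add_one_mul_le hp₀ hp₁ hp₂ t c

end

theorem stmt4_general (a : ℝ) (ha0 : a ≠ 0)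
    (p : ℝ → ℝ) (hppos : ∀ y, 0 < p y)
    (hpint : ∫ y, p y = 1) (hpvar : Integrable (fun y => y ^ 2 * p y)) :
    ∃ ε > (0 : ℝ), ∀ δ > (0 : ℝ), ∃ t : ℝ, t ≠ 0 ∧ |t| < δ ∧ ∃ x : ℝ,
      ε ≤ (1 + x ^ 2)⁻¹ *
        ‖(∫ y : ℝ, Complex.exp (Complex.I * ((t * (a * x + y) : ℝ) : ℂ)) *
              (((a * x + y : ℝ) : ℂ)) ^ 2 * ((p y : ℝ) : ℂ)) -
          ((∫ y : ℝ, (a * x + y) ^ 2 * p y : ℝ) : ℂ)‖ := by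
  have hp₀ : ∀ y, 0 ≤ p y := fun y => (hppos y).le
  have hp : Integrable p := by
    by_contra h
    simp [integral_undef h] at hpint
  set m₁ := ∫ y, |y| * p y
  set m₂ := ∫ y, y ^ 2 * p y
  have hm₁ : 0 ≤ m₁ := integral_nonneg fun y => mul_nonneg (abs_nonneg y) (hp₀ y)
  have hm₂ : 0 ≤ m₂ := integral_nonneg fun y => mul_nonneg (sq_nonneg y) (hp₀ y)
  refine ⟨a ^ 2, by positivity, fun δ hδ => ?_⟩
  obtain ⟨c, hc_one, hc_large, hc_δ⟩ : ∃ c : ℝ,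
      1 ≤ c ∧ (Real.pi + 4) * m₁ + (2 * m₂ + a ^ 2) ≤ c ∧ Real.pi / δ < c := by
    have : 0 ≤ (Real.pi + 4) * m₁ + (2 * m₂ + a ^ 2) := by positivity
    have : 0 < Real.pi / δ := by positivity
    exact ⟨(Real.pi + 4) * m₁ + (2 * m₂ + a ^ 2) + Real.pi / δ + 1,
      by linarith, by linarith, by linarith⟩
  have hc : 0 < c := by linarith
  refine ⟨Real.pi / c, by positivity, ?_, c / a, ?_⟩
  · rw [abs_of_pos (by positivity), div_lt_iff₀ hc]
    rwa [div_lt_iff₀ hδ, mul_comm] at hc_δ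
  have key := le_norm_integral_exp_I_mul_sq_sub_integral_sq hp₀ hp hpint hpvar
    (t := Real.pi / c) (c := c) (by field_simp)
  rw [show a * (c / a) = c by field_simp, le_inv_mul_iff₀ (by positivity)]
  refine le_trans ?_ key
  rw [abs_of_pos hc, abs_of_pos (by positivity)]
  calc (1 + (c / a) ^ 2) * a ^ 2 = c ^ 2 + a ^ 2 := by field_simp; ring
    _ ≤ c ^ 2 * (2 - Real.pi / c * m₁) - (4 * c * m₁ + 2 * m₂) := by
      have h_pi : c ^ 2 * (Real.pi / c * m₁) = Real.pi * c * m₁ := by field_simp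
      nlinarith [mul_le_mul_of_nonneg_left hc_large hc.le,
        mul_le_mul_of_nonneg_left hc_one (by positivity : 0 ≤ 2 * m₂ + a ^ 2)]

/-- Counter-example: for the autoregressive chain `Xₙ = aX_{n-1} + θₙ` with `ξ(x) = x` and
`g(x) = x²`, the quantity `sup_x (1+x²)⁻¹ |Q(t)g(x) − Qg(x)|` does not tend to `0` as `t → 0`;
hence `‖Q(t) − Q‖_{B_v}` does not tend to `0`. (Non-convergence is expressed by exhibiting
`ε > 0` and, for every `δ > 0`, a nonzero `t` with `|t| < δ` and a point `x` at which the
weighted difference is at least `ε`.) -/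
theorem stmt4 (a : ℝ) (ha1 : -1 < a) (ha2 : a < 1) (ha0 : a ≠ 0)
    (p : ℝ → ℝ) (hpmeas : Measurable p) (hppos : ∀ y, 0 < p y)
    (hpint : ∫ y, p y = 1) (hpvar : Integrable (fun y => y ^ 2 * p y)) :
    ∃ ε > (0 : ℝ), ∀ δ > (0 : ℝ), ∃ t : ℝ, t ≠ 0 ∧ |t| < δ ∧ ∃ x : ℝ,
      ε ≤ (1 + x ^ 2)⁻¹ *
        ‖(∫ y : ℝ, Complex.exp (Complex.I * ((t * (a * x + y) : ℝ) : ℂ)) *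
              (((a * x + y : ℝ) : ℂ)) ^ 2 * ((p y : ℝ) : ℂ)) -
          ((∫ y : ℝ, (a * x + y) ^ 2 * p y : ℝ) : ℂ)‖ :=
  stmt4_general a ha0 p hppos hpint hpvar
end

section
/- Let Q be a bounded operator on a Banach space B of (classes of) functions continuously embedded in L¹(π), where π is a probability measure, with ‖π(|Q(t)ⁿ w|)‖ controlled by the embedding. Suppose t ∈ ℝ^d, λ ∈ ℂ with |λ| = 1, A is a π-full Q-absorbing set, and w ∈ B is bounded with |w| equal to a nonzero constant on A, such that for all x ∈ A, e^{i⟨t,ξ(y)⟩} w(y) = λ w(x) for Q(x,dy)-a.e. y. Then the spectral radius of the Fourier operator Q(t) on B satisfies r(Q(t)) ≥ 1. -/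
open MeasureTheory ProbabilityTheory Filter
open scoped InnerProductSpace ENNReal Topology

/-!
Since `A` is `π`-full and absorbing, and `π` is `Q`-invariant, integrating the functional
equation against `Q(x, dy)` gives `Q(t)ⁿ w = λⁿ w` `π`-a.e. on `A`. Hence `|Q(t)ⁿ w| = c`
`π`-a.e., so `‖ι (Q(t)ⁿ w)‖ = c` for every `n` and the norms `‖Q(t)ⁿ‖` are bounded below by
a positive constant; Gelfand's formula then forces `r(Q(t)) ≥ 1`.
-/

theorem one_le_spectralRadius_of_forall_le_norm_pow {A : Type*} [NormedRing A]
    [NormedAlgebra ℂ A] [CompleteSpace A] {a : A} {C : ℝ} (hC : 0 < C)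
    (h : ∀ n : ℕ, C ≤ ‖a ^ n‖) : 1 ≤ spectralRadius ℂ a := by
  have hroot : Tendsto (fun n : ℕ => ENNReal.ofReal (C ^ (1 / n : ℝ))) atTop (𝓝 1) := by
    simpa using ENNReal.tendsto_ofReal <|
      (Real.continuousAt_const_rpow hC.ne').tendsto.comp tendsto_one_div_atTop_nhds_zero_nat
  refine le_of_tendsto_of_tendsto' hroot
    (spectrum.pow_norm_pow_one_div_tendsto_nhds_spectralRadius a) fun n => ?_
  gcongr
  exact h n

theorem one_le_spectralRadius_of_forall_le_norm_apply_pow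
    {B F : Type*} [NormedAddCommGroup B] [NormedSpace ℂ B] [CompleteSpace B]
    [SeminormedAddCommGroup F] [NormedSpace ℂ F] {T : B →L[ℂ] B} (S : B →L[ℂ] F) (v : B)
    {c : ℝ} (hc : 0 < c) (h : ∀ n : ℕ, c ≤ ‖S ((T ^ n) v)‖) : 1 ≤ spectralRadius ℂ T := by
  have hbound : ∀ n : ℕ, c ≤ ‖T ^ n‖ * (‖S‖ * ‖v‖) := fun n =>
    calc c ≤ ‖S ((T ^ n) v)‖ := h n
      _ ≤ ‖S‖ * (‖T ^ n‖ * ‖v‖) := S.le_opNorm_of_le ((T ^ n).le_opNorm v)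
      _ = ‖T ^ n‖ * (‖S‖ * ‖v‖) := by ring
  have hSv : 0 < ‖S‖ * ‖v‖ := by
    by_contra! hle
    nlinarith [hbound 0, norm_nonneg (T ^ 0)]
  exact one_le_spectralRadius_of_forall_le_norm_pow (div_pos hc hSv)
    fun n => (div_le_iff₀ hSv).2 (hbound n)

theorem MeasureTheory.Lp.norm_eq_of_ae_norm_eq {α F : Type*} [MeasurableSpace α] {μ : Measure α}
    [IsProbabilityMeasure μ] [NormedAddCommGroup F] {p : ℝ≥0∞} (hp : p ≠ 0)
    (f : Lp F p μ) {c : ℝ} (hc : 0 ≤ c) (hf : ∀ᵐ x ∂μ, ‖(f : α → F) x‖ = c) : ‖f‖ = c := by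
  rw [Lp.norm_def, eLpNorm_congr_norm_ae (g := fun _ => c) (by simpa [abs_of_nonneg hc] using hf),
    eLpNorm_const _ hp (IsProbabilityMeasure.ne_zero μ)]
  simp [abs_of_nonneg hc]

theorem ae_pow_apply_eq_pow_mul_of_ae_eq_mul {E B : Type*} [MeasurableSpace E]
    {Q : Kernel E E} [IsMarkovKernel Q] {π : Measure E} (hinv : π.bind (fun x => Q x) = π)
    [NormedAddCommGroup B] [NormedSpace ℂ B] {ι : B →L[ℂ] Lp ℂ 1 π} {T : B →L[ℂ] B}
    {e : E → ℂ} (hT : ∀ f : B, (ι (T f) : E → ℂ) =ᵐ[π]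
      fun x => ∫ y, e y * (ι f : E → ℂ) y ∂(Q x))
    {A : Set E} (hA : ∀ x ∈ A, ∀ᵐ y ∂(Q x), y ∈ A) {lam : ℂ} {w : B}
    (hw : ∀ x ∈ A, ∀ᵐ y ∂(Q x), e y * (ι w : E → ℂ) y = lam * (ι w : E → ℂ) x) (n : ℕ) :
    ∀ᵐ x ∂π, x ∈ A → (ι ((T ^ n) w) : E → ℂ) x = lam ^ n * (ι w : E → ℂ) x := by
  induction n with
  | zero => exact ae_of_all _ fun x _ => by simp
  | succ n ih =>
    have hQih : ∀ᵐ x ∂π, ∀ᵐ y ∂(Q x),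
        y ∈ A → (ι ((T ^ n) w) : E → ℂ) y = lam ^ n * (ι w : E → ℂ) y :=
      Measure.ae_ae_of_ae_comp (hinv.symm ▸ ih)
    filter_upwards [hT ((T ^ n) w), hQih] with x hTx hih hxA
    calc (ι ((T ^ (n + 1)) w) : E → ℂ) x
        = ∫ y, e y * (ι ((T ^ n) w) : E → ℂ) y ∂(Q x) := by rw [pow_succ', ← hTx]; rfl
      _ = ∫ y, lam ^ n * (lam * (ι w : E → ℂ) x) ∂(Q x) := by
        refine integral_congr_ae ?_
        filter_upwards [hA x hxA, hih, hw x hxA] with y hyA hy hwy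
        rw [hy hyA, mul_left_comm, hwy]
      _ = lam ^ (n + 1) * (ι w : E → ℂ) x := by simp [pow_succ, mul_assoc]

theorem stmt5_general {E : Type*} [MeasurableSpace E] {d : ℕ}
    (Q : Kernel E E) [IsMarkovKernel Q]
    (π : Measure E) [IsProbabilityMeasure π]
    (hinv : π.bind (fun x => Q x) = π)
    (ξ : E → EuclideanSpace ℝ (Fin d))
    (t : EuclideanSpace ℝ (Fin d))
    (B : Type*) [NormedAddCommGroup B] [NormedSpace ℂ B] [CompleteSpace B]
    (ι : B →L[ℂ] Lp ℂ 1 π)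
    (T : B →L[ℂ] B)
    -- `T` acts on `B` as the Fourier kernel `Q(t)`
    (hT : ∀ f : B, (ι (T f) : E → ℂ) =ᵐ[π]
      fun x => ∫ y, Complex.exp (Complex.I * (⟪t, ξ y⟫_ℝ : ℂ)) * (ι f : E → ℂ) y ∂(Q x))
    (lam : ℂ) (hlam : ‖lam‖ = 1)
    (A : Set E) (hAmeas : MeasurableSet A) (hAfull : π A = 1)
    (hAabs : ∀ a ∈ A, Q a A = 1)
    (w : B)
    (hwconst : ∃ c : ℝ, 0 < c ∧ ∀ x ∈ A, ‖(ι w : E → ℂ) x‖ = c)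
    (hfe : ∀ x ∈ A, ∀ᵐ y ∂(Q x),
      Complex.exp (Complex.I * (⟪t, ξ y⟫_ℝ : ℂ)) * (ι w : E → ℂ) y = lam * (ι w : E → ℂ) x) :
    1 ≤ spectralRadius ℂ T := by
  obtain ⟨c, hc, hwc⟩ := hwconst
  have hAae : ∀ᵐ x ∂π, x ∈ A := (mem_ae_iff_prob_eq_one hAmeas).2 hAfull
  have hQA : ∀ x ∈ A, ∀ᵐ y ∂(Q x), y ∈ A := fun x hx =>
    (mem_ae_iff_prob_eq_one hAmeas).2 (hAabs x hx)
  refine one_le_spectralRadius_of_forall_le_norm_apply_pow ι w hc fun n => le_of_eq ?_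
  refine (Lp.norm_eq_of_ae_norm_eq one_ne_zero _ hc.le ?_).symm
  filter_upwards [ae_pow_apply_eq_pow_mul_of_ae_eq_mul hinv hT hQA hfe n, hAae] with x hx hxA
  rw [hx hxA, norm_mul, norm_pow, hlam, one_pow, one_mul, hwc x hxA]

/-- If `e^{i⟨t,ξ(y)⟩} w(y) = λ w(x)` for `Q(x,dy)`-a.e. `y` and all `x` in a `π`-full
`Q`-absorbing set `A`, where `|λ| = 1` and `w` is a bounded element of `B` whose modulus
is a nonzero constant on `A`, then the spectral radius of the Fourier operator `Q(t)` on
`B` is at least `1`.  Here `B` is a Banach space continuously embedded (via `ι`) into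
`L¹(π)`, and `T` is the operator `Q(t)` acting on `B`. -/
theorem stmt5 {E : Type*} [MeasurableSpace E] {d : ℕ}
    (Q : Kernel E E) [IsMarkovKernel Q]
    (π : Measure E) [IsProbabilityMeasure π]
    (hinv : π.bind (fun x => Q x) = π)
    (ξ : E → EuclideanSpace ℝ (Fin d)) (hξ : Measurable ξ)
    (t : EuclideanSpace ℝ (Fin d))
    (B : Type*) [NormedAddCommGroup B] [NormedSpace ℂ B] [CompleteSpace B]
    (ι : B →L[ℂ] Lp ℂ 1 π)
    (T : B →L[ℂ] B)
    -- `T` acts on `B` as the Fourier kernel `Q(t)`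
    (hT : ∀ f : B, (ι (T f) : E → ℂ) =ᵐ[π]
      fun x => ∫ y, Complex.exp (Complex.I * (⟪t, ξ y⟫_ℝ : ℂ)) * (ι f : E → ℂ) y ∂(Q x))
    (lam : ℂ) (hlam : ‖lam‖ = 1)
    (A : Set E) (hAmeas : MeasurableSet A) (hAfull : π A = 1)
    (hAabs : ∀ a ∈ A, Q a A = 1)
    (w : B)
    (hwbdd : ∃ M : ℝ, ∀ x, ‖(ι w : E → ℂ) x‖ ≤ M)
    (hwconst : ∃ c : ℝ, 0 < c ∧ ∀ x ∈ A, ‖(ι w : E → ℂ) x‖ = c)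
    (hfe : ∀ x ∈ A, ∀ᵐ y ∂(Q x),
      Complex.exp (Complex.I * (⟪t, ξ y⟫_ℝ : ℂ)) * (ι w : E → ℂ) y = lam * (ι w : E → ℂ) x) :
    1 ≤ spectralRadius ℂ T :=
  stmt5_general Q π hinv ξ t B ι T hT lam hlam A hAmeas hAfull hAabs w hwconst hfe
end

section
/- Let (Xₙ)_{n≥0} be a stationary Markov chain with transition kernel Q and stationary distribution π, ξ : E → ℝ^d π-integrable with π(ξ) = 0, and suppose the Poisson-equation solution ξ̆_t = Σ_{n≥0} Qⁿξ_t exists in L²(π) for ξ_t = ⟨t,ξ⟩. If the asymptotic variance ⟨Γt,t⟩ := π(ξ̆_t²) − π((Qξ̆_t)²) equals 0 for some t ≠ 0, then ⟨t, ξ(X₁)⟩ = g(X₀) − g(X₁) P_π-a.s. with g = Qξ̆_t. Conversely, if ⟨t, ξ(X₁)⟩ = g(X₀) − g(X₁) P_π-a.s. for some g ∈ L²(π) and t ≠ 0, then E_π[⟨t,Sₙ⟩²]/n → 0, where Sₙ = Σ_{k=1}^n ξ(X_k). -/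
/-! Under stationarity, `π(f²) − π((Qf)²)` is the `π`-average of the conditional variances
`Var[f; Q x]`, i.e. `E_π[(f(X₁) − Qf(X₀))²]`. If it vanishes then `f(X₁) = Qf(X₀)` a.s., and the
Poisson equation `f = h + Qf` taken at `X₁` gives `h(X₁) = Qf(X₀) − Qf(X₁)`. Conversely, a
coboundary telescopes, `Sₙ = g(X₀) − g(Xₙ)`, whose second moment is at most `4π(g²)` since every
`Xₙ` has law `π`. -/

open MeasureTheory ProbabilityTheory Filter
open scoped InnerProductSpace Topology

lemma sq_integral_le_integral_sq {Ω : Type*} [MeasurableSpace Ω] {μ : Measure Ω}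
    [IsProbabilityMeasure μ] {f : Ω → ℝ} (hf : MemLp f 2 μ) :
    (∫ ω, f ω ∂μ) ^ 2 ≤ ∫ ω, f ω ^ 2 ∂μ := by
  simpa [variance_eq_sub hf] using variance_nonneg f μ

namespace ProbabilityTheory

variable {E : Type*} [MeasurableSpace E] {π : Measure E} {Q : Kernel E E}

lemma integrable_integral_kernel_of_comp_eq (hinv : Q ∘ₘ π = π) {F : E → ℝ}
    (hF : Integrable F π) : Integrable (fun x => ∫ y, F y ∂Q x) π := by
  rw [← hinv, Measure.comp_eq_comp_const_apply] at hF
  simpa using hF.integral_comp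

lemma integral_integral_kernel_of_comp_eq (hinv : Q ∘ₘ π = π) {F : E → ℝ}
    (hF : Integrable F π) : ∫ x, ∫ y, F y ∂Q x ∂π = ∫ x, F x ∂π := by
  rw [← hinv, Measure.comp_eq_comp_const_apply] at hF
  conv_rhs => rw [← hinv, Measure.comp_eq_comp_const_apply, Kernel.integral_comp hF]
  simp

lemma ae_memLp_kernel_of_comp_eq (hinv : Q ∘ₘ π = π) {f : E → ℝ} (hf : Measurable f)
    (hf2 : MemLp f 2 π) : ∀ᵐ x ∂π, MemLp f 2 (Q x) := by
  have hint := hf2.integrable_sq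
  rw [← hinv] at hint
  filter_upwards [Measure.ae_integrable_of_integrable_comp hint] with x hx
  exact (memLp_two_iff_integrable_sq hf.aestronglyMeasurable).2 hx

variable [IsMarkovKernel Q]

lemma memLp_integral_kernel_of_comp_eq (hinv : Q ∘ₘ π = π) {f : E → ℝ} (hf : Measurable f)
    (hf2 : MemLp f 2 π) : MemLp (fun x => ∫ y, f y ∂Q x) 2 π := by
  have hmeas : Measurable fun x => ∫ y, f y ∂Q x :=
    hf.stronglyMeasurable.integral_kernel.measurable
  refine (memLp_two_iff_integrable_sq hmeas.aestronglyMeasurable).2 <|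
    (integrable_integral_kernel_of_comp_eq hinv hf2.integrable_sq).mono'
      (hmeas.pow_const 2).aestronglyMeasurable ?_
  filter_upwards [ae_memLp_kernel_of_comp_eq hinv hf hf2] with x hx
  rw [Real.norm_of_nonneg (sq_nonneg _)]
  exact sq_integral_le_integral_sq hx

lemma ae_variance_kernel_eq_of_comp_eq (hinv : Q ∘ₘ π = π) {f : E → ℝ} (hf : Measurable f)
    (hf2 : MemLp f 2 π) :
    ∀ᵐ x ∂π, Var[f; Q x] = ∫ y, f y ^ 2 ∂Q x - (∫ y, f y ∂Q x) ^ 2 := by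
  filter_upwards [ae_memLp_kernel_of_comp_eq hinv hf hf2] with x hx
  simpa using variance_eq_sub hx

lemma integrable_variance_kernel_of_comp_eq (hinv : Q ∘ₘ π = π) {f : E → ℝ}
    (hf : Measurable f) (hf2 : MemLp f 2 π) : Integrable (fun x => Var[f; Q x]) π :=
  ((integrable_integral_kernel_of_comp_eq hinv hf2.integrable_sq).sub
    (memLp_integral_kernel_of_comp_eq hinv hf hf2).integrable_sq).congr <| by
    filter_upwards [ae_variance_kernel_eq_of_comp_eq hinv hf hf2] with x hx using hx.symm

lemma integral_variance_kernel_of_comp_eq (hinv : Q ∘ₘ π = π) {f : E → ℝ} (hf : Measurable f)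
    (hf2 : MemLp f 2 π) :
    ∫ x, Var[f; Q x] ∂π = ∫ x, f x ^ 2 ∂π - ∫ x, (∫ y, f y ∂Q x) ^ 2 ∂π := by
  rw [integral_congr_ae (ae_variance_kernel_eq_of_comp_eq hinv hf hf2), integral_sub
    (integrable_integral_kernel_of_comp_eq hinv hf2.integrable_sq)
    (memLp_integral_kernel_of_comp_eq hinv hf hf2).integrable_sq,
    integral_integral_kernel_of_comp_eq hinv hf2.integrable_sq]

lemma ae_eq_integral_kernel_of_integral_sq_eq [SFinite π] (hinv : Q ∘ₘ π = π) {f : E → ℝ}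
    (hf : Measurable f) (hf2 : MemLp f 2 π)
    (hsq : ∫ x, f x ^ 2 ∂π = ∫ x, (∫ y, f y ∂Q x) ^ 2 ∂π) :
    ∀ᵐ p ∂(π ⊗ₘ Q), f p.2 = ∫ y, f y ∂Q p.1 := by
  have hmeas : Measurable fun x => ∫ y, f y ∂Q x :=
    hf.stronglyMeasurable.integral_kernel.measurable
  have hvar : ∀ᵐ x ∂π, Var[f; Q x] = 0 :=
    (integral_eq_zero_iff_of_nonneg (fun x => variance_nonneg f (Q x))
      (integrable_variance_kernel_of_comp_eq hinv hf hf2)).1 <| by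
        rw [integral_variance_kernel_of_comp_eq hinv hf hf2, hsq, sub_self]
  refine Measure.ae_compProd_of_ae_ae (measurableSet_eq_fun (hf.comp measurable_snd)
    (hmeas.comp measurable_fst)) ?_
  filter_upwards [hvar, ae_memLp_kernel_of_comp_eq hinv hf hf2] with x hx hx2
  rw [variance_eq_integral hf.aemeasurable] at hx
  filter_upwards [(integral_eq_zero_iff_of_nonneg (fun y => sq_nonneg _)
    (hx2.sub (memLp_const _)).integrable_sq).1 hx] with y hy
  simpa [sub_eq_zero] using hy

theorem ae_compProd_eq_sub_of_integral_sq_eq [SFinite π] (hinv : Q ∘ₘ π = π) {f h : E → ℝ}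
    (hf : Measurable f) (hf2 : MemLp f 2 π)
    (hpoisson : ∀ᵐ x ∂π, f x = h x + ∫ y, f y ∂Q x)
    (hsq : ∫ x, f x ^ 2 ∂π = ∫ x, (∫ y, f y ∂Q x) ^ 2 ∂π) :
    ∀ᵐ p ∂(π ⊗ₘ Q), h p.2 = (∫ y, f y ∂Q p.1) - ∫ y, f y ∂Q p.2 := by
  have hpoisson_snd : ∀ᵐ p ∂(π ⊗ₘ Q), f p.2 = h p.2 + ∫ y, f y ∂Q p.2 :=
    ae_of_ae_map measurable_snd.aemeasurable <| by
      change ∀ᵐ y ∂(π ⊗ₘ Q).snd, _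
      rwa [Measure.snd_compProd, hinv]
  filter_upwards [hpoisson_snd, ae_eq_integral_kernel_of_integral_sq_eq hinv hf hf2 hsq]
    with p h₁ h₂
  linarith

end ProbabilityTheory

lemma Finset.sum_Icc_one_eq_sub_of_forall_eq_sub {M : Type*} [AddCommGroup M] {h g : ℕ → M}
    (hcob : ∀ k, h (k + 1) = g k - g (k + 1)) (n : ℕ) :
    ∑ k ∈ Finset.Icc 1 n, h k = g 0 - g n := by
  induction n with
  | zero => simp
  | succ n ih =>
    rw [Finset.sum_Icc_succ_top (Nat.le_add_left 1 n), ih, hcob]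
    abel

section Chain

variable {E Ω : Type*} [MeasurableSpace E] [MeasurableSpace Ω] {P : Measure Ω} {X : ℕ → Ω → E}

lemma ae_pair_of_ae_pair_zero {μ : Measure (E × E)} (hX : ∀ n, Measurable (X n))
    (hpair : ∀ n, P.map (fun ω => (X n ω, X (n + 1) ω)) = μ) {R : E × E → Prop}
    (hR : MeasurableSet {p | R p}) (h₀ : ∀ᵐ ω ∂P, R (X 0 ω, X 1 ω)) (n : ℕ) :
    ∀ᵐ ω ∂P, R (X n ω, X (n + 1) ω) := by
  have hμ : ∀ᵐ p ∂μ, R p := by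
    rw [← hpair 0]
    exact (ae_map_iff ((hX 0).prodMk (hX 1)).aemeasurable hR).2 h₀
  exact ae_of_ae_map ((hX n).prodMk (hX (n + 1))).aemeasurable (by rwa [hpair n])

lemma integral_sq_sub_comp_le {π : Measure E} {Y Z : Ω → E} (hY : MeasurePreserving Y P π)
    (hZ : MeasurePreserving Z P π) {g : E → ℝ} (hg : MemLp g 2 π) :
    ∫ ω, (g (Y ω) - g (Z ω)) ^ 2 ∂P ≤ 4 * ∫ x, g x ^ 2 ∂π := by
  have hgY : MemLp (fun ω => g (Y ω)) 2 P := hg.comp_measurePreserving hY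
  have hgZ : MemLp (fun ω => g (Z ω)) 2 P := hg.comp_measurePreserving hZ
  have hsq : ∀ {W : Ω → E}, MeasurePreserving W P π → ∫ ω, g (W ω) ^ 2 ∂P = ∫ x, g x ^ 2 ∂π :=
    fun hW => hW.hasLaw.integral_comp (hg.aestronglyMeasurable.pow 2)
  calc ∫ ω, (g (Y ω) - g (Z ω)) ^ 2 ∂P
      ≤ ∫ ω, (2 * g (Y ω) ^ 2 + 2 * g (Z ω) ^ 2) ∂P :=
        integral_mono (hgY.sub hgZ).integrable_sq
          ((hgY.integrable_sq.const_mul 2).add (hgZ.integrable_sq.const_mul 2))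
          fun ω => by nlinarith [sq_nonneg (g (Y ω) + g (Z ω))]
    _ = 4 * ∫ x, g x ^ 2 ∂π := by
        rw [integral_add (hgY.integrable_sq.const_mul 2) (hgZ.integrable_sq.const_mul 2),
          integral_const_mul, integral_const_mul, hsq hY, hsq hZ]
        ring

theorem tendsto_integral_sq_sum_div_of_coboundary {π : Measure E}
    (hX : ∀ n, MeasurePreserving (X n) P π) {h g : E → ℝ} (hg : MemLp g 2 π)
    (hcob : ∀ n, ∀ᵐ ω ∂P, h (X (n + 1) ω) = g (X n ω) - g (X (n + 1) ω)) :
    Tendsto (fun n : ℕ => (∫ ω, (∑ k ∈ Finset.Icc 1 n, h (X k ω)) ^ 2 ∂P) / n) atTop (𝓝 0) := by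
  refine squeeze_zero (fun n => div_nonneg (integral_nonneg fun _ => sq_nonneg _) n.cast_nonneg)
    (fun n => div_le_div_of_nonneg_right ?_ n.cast_nonneg)
    (tendsto_const_div_atTop_nhds_zero_nat (4 * ∫ x, g x ^ 2 ∂π))
  calc ∫ ω, (∑ k ∈ Finset.Icc 1 n, h (X k ω)) ^ 2 ∂P
      = ∫ ω, (g (X 0 ω) - g (X n ω)) ^ 2 ∂P := by
        refine integral_congr_ae ?_
        filter_upwards [ae_all_iff.2 hcob] with ω hω
        rw [Finset.sum_Icc_one_eq_sub_of_forall_eq_sub hω]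
    _ ≤ 4 * ∫ x, g x ^ 2 ∂π := integral_sq_sub_comp_le (hX 0) (hX n) hg

end Chain

theorem stmt7_general {E : Type*} [MeasurableSpace E] {d : ℕ}
    (Q : Kernel E E) [IsMarkovKernel Q]
    (π : Measure E) [IsProbabilityMeasure π]
    (hinv : π.bind (fun x => Q x) = π)
    (ξ : E → EuclideanSpace ℝ (Fin d)) (hξmeas : Measurable ξ)
    {Ω : Type*} [MeasurableSpace Ω] (P : Measure Ω)
    (X : ℕ → Ω → E) (hXmeas : ∀ n, Measurable (X n))
    (hpair : ∀ n : ℕ, Measure.map (fun ω => (X n ω, X (n + 1) ω)) P = π ⊗ₘ Q)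
    (t : EuclideanSpace ℝ (Fin d))
    (bξ : E → ℝ) (hbmeas : Measurable bξ) (hbL2 : MemLp bξ 2 π)
    (hPoisson : ∀ᵐ x ∂π, bξ x = ⟪t, ξ x⟫_ℝ + ∫ y, bξ y ∂(Q x)) :
    ((∫ x, (bξ x) ^ 2 ∂π) - ∫ x, (∫ y, bξ y ∂(Q x)) ^ 2 ∂π = 0 →
      ∀ᵐ ω ∂P, ⟪t, ξ (X 1 ω)⟫_ℝ =
        (∫ y, bξ y ∂(Q (X 0 ω))) - ∫ y, bξ y ∂(Q (X 1 ω))) ∧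
    (∀ g : E → ℝ, Measurable g → MemLp g 2 π →
      (∀ᵐ ω ∂P, ⟪t, ξ (X 1 ω)⟫_ℝ = g (X 0 ω) - g (X 1 ω)) →
      Tendsto
        (fun n : ℕ =>
          (∫ ω, (⟪t, ∑ k ∈ Finset.Icc 1 n, ξ (X k ω)⟫_ℝ) ^ 2 ∂P) / n)
        atTop (nhds 0)) := by
  have hlaw : ∀ n, MeasurePreserving (X n) P π := fun n =>
    ⟨hXmeas n, by rw [← Measure.fst_map_prodMk (hXmeas (n + 1)), hpair n, Measure.fst_compProd]⟩
  refine ⟨fun hvar => ?_, fun g hg hg2 hcob => ?_⟩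
  · have hcob₀ :=
      ae_compProd_eq_sub_of_integral_sq_eq hinv hbmeas hbL2 hPoisson (sub_eq_zero.1 hvar)
    rw [← hpair 0] at hcob₀
    exact ae_of_ae_map ((hXmeas 0).prodMk (hXmeas 1)).aemeasurable hcob₀
  · have hcob_succ := ae_pair_of_ae_pair_zero hXmeas hpair
      (R := fun p => ⟪t, ξ p.2⟫_ℝ = g p.1 - g p.2)
      (measurableSet_eq_fun (measurable_const.inner (hξmeas.comp measurable_snd))
        ((hg.comp measurable_fst).sub (hg.comp measurable_snd))) hcob
    simp_rw [inner_sum]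
    exact tendsto_integral_sq_sum_div_of_coboundary (h := fun x => ⟪t, ξ x⟫_ℝ) hlaw hg2 hcob_succ

/-- Degeneracy of the asymptotic variance.  Let `(Xₙ)` be a stationary Markov chain with
kernel `Q` and stationary law `π` (each consecutive pair `(Xₙ, Xₙ₊₁)` has law `π ⊗ₘ Q`),
`ξ` `π`-centered, and `ξ̆_t` an `L²(π)` solution of the Poisson equation
`ξ̆_t = ⟨t,ξ⟩ + Qξ̆_t`.  If `π(ξ̆_t²) − π((Qξ̆_t)²) = 0` then
`⟨t,ξ(X₁)⟩ = g(X₀) − g(X₁)` a.s. with `g = Qξ̆_t`; conversely, if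
`⟨t,ξ(X₁)⟩ = g(X₀) − g(X₁)` a.s. for some `g ∈ L²(π)`, then `E_π[⟨t,Sₙ⟩²]/n → 0`. -/
theorem stmt7 {E : Type*} [MeasurableSpace E] {d : ℕ}
    (Q : Kernel E E) [IsMarkovKernel Q]
    (π : Measure E) [IsProbabilityMeasure π]
    (hinv : π.bind (fun x => Q x) = π)
    (ξ : E → EuclideanSpace ℝ (Fin d)) (hξmeas : Measurable ξ)
    (hξint : Integrable ξ π) (hξcent : ∫ x, ξ x ∂π = 0)
    {Ω : Type*} [MeasurableSpace Ω] (P : Measure Ω) [IsProbabilityMeasure P]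
    (X : ℕ → Ω → E) (hXmeas : ∀ n, Measurable (X n))
    (hpair : ∀ n : ℕ, Measure.map (fun ω => (X n ω, X (n + 1) ω)) P = π ⊗ₘ Q)
    (t : EuclideanSpace ℝ (Fin d)) (ht : t ≠ 0)
    (bξ : E → ℝ) (hbmeas : Measurable bξ) (hbL2 : MemLp bξ 2 π)
    (hPoisson : ∀ᵐ x ∂π, bξ x = ⟪t, ξ x⟫_ℝ + ∫ y, bξ y ∂(Q x)) :
    ((∫ x, (bξ x) ^ 2 ∂π) - ∫ x, (∫ y, bξ y ∂(Q x)) ^ 2 ∂π = 0 →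
      ∀ᵐ ω ∂P, ⟪t, ξ (X 1 ω)⟫_ℝ =
        (∫ y, bξ y ∂(Q (X 0 ω))) - ∫ y, bξ y ∂(Q (X 1 ω))) ∧
    (∀ g : E → ℝ, Measurable g → MemLp g 2 π →
      (∀ᵐ ω ∂P, ⟪t, ξ (X 1 ω)⟫_ℝ = g (X 0 ω) - g (X 1 ω)) →
      Tendsto
        (fun n : ℕ =>
          (∫ ω, (⟪t, ∑ k ∈ Finset.Icc 1 n, ξ (X k ω)⟫_ℝ) ^ 2 ∂P) / n)
        atTop (nhds 0)) :=
  stmt7_general Q π hinv ξ hξmeas P X hXmeas hpair t bξ hbmeas hbL2 hPoisson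
end

section
/- Let B ↪ B̃ be Banach spaces of functions, and suppose that for all t in a neighbourhood and z in a region D of ℂ, the operators R_z(t) = (z − Q(t))^{−1} exist and satisfy: ‖R_z(t)‖ uniformly bounded as operators on suitable intermediate spaces B = B_θ ↪ B_{θ₁} ↪ B_{θ₂} ↪ B_{θ₃} = B̃, Q(·) ∈ C¹ from a neighbourhood of t₀ into L(B_{θ₁},B_{θ₂}), Q(·) continuous into L(B_{θ₂},B_{θ₃}), and R_z(·) continuous from B into L(B,B_{θ₁}) uniformly in z. Then t ↦ R_z(t), viewed in L(B, B̃), is differentiable at t₀ with derivative R_z(t₀) Q'(t₀) R_z(t₀), uniformly in z ∈ D. -/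
/-!
By the second resolvent identity on `B̃`, `R(t) − R(t₀) = R(t₀) (Q(t) − Q(t₀)) R(t)`, and by
compatibility with the embeddings the middle factor may be read in `L(B₁, B₂)` and the right one
in `L(B, B₁)`. Subtracting `h R(t₀) Q'(t₀) R(t₀)` (with `h = t − t₀`) leaves
`R(t₀) [Q(t) − Q(t₀) − h Q'(t₀)] R(t) + R(t₀) [h Q'(t₀)] [R(t) − R(t₀)]`: the first term is
`o(h)` since `Q` is differentiable at `t₀` and `R` is uniformly bounded, the second is `o(h)`
since `R(·)` is continuous at `t₀` into `L(B, B₁)`, uniformly in `z`.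
-/

open ContinuousLinearMap

theorem sub_eq_mul_sub_mul_of_mul_sub_eq_one {R : Type*} [Ring R] {c a b r s : R}
    (hr : (c - a) * r = 1) (hs : s * (c - b) = 1) : r - s = s * (a - b) * r := by
  have hab : a - b = (c - b) - (c - a) := by abel
  rw [hab, mul_sub, sub_mul, hs, one_mul, mul_assoc, hr, mul_one]

theorem norm_comp_comp_sub_comp_comp_le {𝕜 X E F G : Type*} [NontriviallyNormedField 𝕜]
    [SeminormedAddCommGroup X] [SeminormedAddCommGroup E] [SeminormedAddCommGroup F]
    [SeminormedAddCommGroup G] [NormedSpace 𝕜 X] [NormedSpace 𝕜 E] [NormedSpace 𝕜 F]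
    [NormedSpace 𝕜 G] (T : F →L[𝕜] G) (A B : E →L[𝕜] F) (S S' : X →L[𝕜] E) :
    ‖T.comp (A.comp S) - T.comp (B.comp S')‖ ≤ ‖T‖ * (‖A - B‖ * ‖S‖ + ‖B‖ * ‖S - S'‖) := by
  have hsplit : T.comp (A.comp S) - T.comp (B.comp S') =
      T.comp ((A - B).comp S + B.comp (S - S')) := by
    simp only [comp_sub, sub_comp, comp_add]
    abel
  rw [hsplit]
  refine (opNorm_comp_le _ _).trans (mul_le_mul_of_nonneg_left ?_ (norm_nonneg T))
  exact (norm_add_le _ _).trans (add_le_add (opNorm_comp_le _ _) (opNorm_comp_le _ _))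

section ResolventChain

variable {𝕜 B0 B1 B2 B3 : Type*} [NontriviallyNormedField 𝕜]
  [NormedAddCommGroup B0] [NormedSpace 𝕜 B0] [NormedAddCommGroup B1] [NormedSpace 𝕜 B1]
  [NormedAddCommGroup B2] [NormedSpace 𝕜 B2] [NormedAddCommGroup B3] [NormedSpace 𝕜 B3]
  {J01 : B0 →L[𝕜] B1} {J12 : B1 →L[𝕜] B2} {J23 : B2 →L[𝕜] B3} {U : Set ℝ} {D : Set 𝕜}
  {Qe1 : ℝ → B1 →L[𝕜] B1} {Qe2 : ℝ → B2 →L[𝕜] B2} {Qe3 : ℝ → B3 →L[𝕜] B3}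
  {R0 : 𝕜 → ℝ → B0 →L[𝕜] B0} {R1 : 𝕜 → ℝ → B1 →L[𝕜] B1}
  {R2 : 𝕜 → ℝ → B2 →L[𝕜] B2} {R3 : 𝕜 → ℝ → B3 →L[𝕜] B3}

theorem comp_resolvent_sub_comp_resolvent
    (hinv3 : ∀ z ∈ D, ∀ t ∈ U, (z • (1 : B3 →L[𝕜] B3) - Qe3 t) * R3 z t = 1 ∧
      R3 z t * (z • (1 : B3 →L[𝕜] B3) - Qe3 t) = 1)
    (hQc1 : ∀ t ∈ U, J12.comp (Qe1 t) = (Qe2 t).comp J12)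
    (hQc2 : ∀ t ∈ U, J23.comp (Qe2 t) = (Qe3 t).comp J23)
    (hRc0 : ∀ z ∈ D, ∀ t ∈ U, J01.comp (R0 z t) = (R1 z t).comp J01)
    (hRc1 : ∀ z ∈ D, ∀ t ∈ U, J12.comp (R1 z t) = (R2 z t).comp J12)
    (hRc2 : ∀ z ∈ D, ∀ t ∈ U, J23.comp (R2 z t) = (R3 z t).comp J23)
    {z : 𝕜} (hz : z ∈ D) {t t₀ : ℝ} (ht : t ∈ U) (ht₀ : t₀ ∈ U) :
    (J23.comp (J12.comp J01)).comp (R0 z t) - (J23.comp (J12.comp J01)).comp (R0 z t₀) =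
      (J23.comp (R2 z t₀)).comp
        ((J12.comp (Qe1 t) - J12.comp (Qe1 t₀)).comp (J01.comp (R0 z t))) := by
  have hres := sub_eq_mul_sub_mul_of_mul_sub_eq_one (hinv3 z hz t ht).1 (hinv3 z hz t₀ ht₀).2
  simp only [ContinuousLinearMap.ext_iff, comp_apply] at hQc1 hQc2 hRc0 hRc1 hRc2
  ext x
  have hx := congr($hres (J23 (J12 (J01 x))))
  simpa [hQc1, hQc2, hRc0, hRc1, hRc2, hz, ht, ht₀] using hx

end ResolventChain

theorem stmt11_general
    {B0 B1 B2 B3 : Type*}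
    [NormedAddCommGroup B0] [NormedSpace ℂ B0]
    [NormedAddCommGroup B1] [NormedSpace ℂ B1]
    [NormedAddCommGroup B2] [NormedSpace ℂ B2]
    [NormedAddCommGroup B3] [NormedSpace ℂ B3]
    (J01 : B0 →L[ℂ] B1) (J12 : B1 →L[ℂ] B2) (J23 : B2 →L[ℂ] B3)
    (U : Set ℝ) (t₀ : ℝ) (ht₀ : t₀ ∈ U) (D : Set ℂ)
    (Qe1 : ℝ → B1 →L[ℂ] B1)
    (Qe2 : ℝ → B2 →L[ℂ] B2) (Qe3 : ℝ → B3 →L[ℂ] B3)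
    (R0 : ℂ → ℝ → B0 →L[ℂ] B0) (R1 : ℂ → ℝ → B1 →L[ℂ] B1)
    (R2 : ℂ → ℝ → B2 →L[ℂ] B2) (R3 : ℂ → ℝ → B3 →L[ℂ] B3)
    -- `R_z(t)` is the inverse of `z − Q(t)` on each level
    (hinv3 : ∀ z ∈ D, ∀ t ∈ U, (z • (1 : B3 →L[ℂ] B3) - Qe3 t) * R3 z t = 1 ∧
      R3 z t * (z • (1 : B3 →L[ℂ] B3) - Qe3 t) = 1)
    -- compatibility of `Q(t)` and `R_z(t)` with the embeddings
    (hQc1 : ∀ t ∈ U, J12.comp (Qe1 t) = (Qe2 t).comp J12)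
    (hQc2 : ∀ t ∈ U, J23.comp (Qe2 t) = (Qe3 t).comp J23)
    (hRc0 : ∀ z ∈ D, ∀ t ∈ U, J01.comp (R0 z t) = (R1 z t).comp J01)
    (hRc1 : ∀ z ∈ D, ∀ t ∈ U, J12.comp (R1 z t) = (R2 z t).comp J12)
    (hRc2 : ∀ z ∈ D, ∀ t ∈ U, J23.comp (R2 z t) = (R3 z t).comp J23)
    -- uniform bounds for the resolvents
    (M : ℝ)
    (hM : ∀ z ∈ D, ∀ t ∈ U, ‖R0 z t‖ ≤ M ∧ ‖R1 z t‖ ≤ M ∧ ‖R2 z t‖ ≤ M ∧ ‖R3 z t‖ ≤ M)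
    -- `Q(·) ∈ C¹` from `U` into `L(B₁,B₂)`
    (Q12' : ℝ → B1 →L[ℂ] B2)
    (hQ12deriv : ∀ t ∈ U, HasDerivAt (fun s => J12.comp (Qe1 s)) (Q12' t) t)
    -- `R_z(·)` continuous into `L(B₀,B₁)` uniformly in `z ∈ D`
    (hRcont : ∀ ε > (0 : ℝ), ∃ δ > (0 : ℝ), ∀ z ∈ D, ∀ t ∈ U, |t - t₀| < δ →
      ‖J01.comp (R0 z t) - J01.comp (R0 z t₀)‖ ≤ ε) :
    ∀ ε > (0 : ℝ), ∃ δ > (0 : ℝ), ∀ z ∈ D, ∀ t ∈ U, |t - t₀| < δ →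
      ‖(J23.comp (J12.comp J01)).comp (R0 z t) -
        (J23.comp (J12.comp J01)).comp (R0 z t₀) -
        (t - t₀) •
          ((J23.comp (R2 z t₀)).comp ((Q12' t₀).comp (J01.comp (R0 z t₀))))‖ ≤
        ε * |t - t₀| := by
  intro ε hε
  obtain ⟨ε₁, hε₁, hε₁ε⟩ := exists_pos_mul_lt (half_pos hε) (‖J23‖ * M * (‖J01‖ * M))
  obtain ⟨ε₂, hε₂, hε₂ε⟩ := exists_pos_mul_lt (half_pos hε) (‖J23‖ * M * ‖Q12' t₀‖)
  obtain ⟨δ₁, hδ₁, hQ⟩ := Metric.eventually_nhds_iff.1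
    ((hasDerivAt_iff_isLittleO.1 (hQ12deriv t₀ ht₀)).def hε₁)
  obtain ⟨δ₂, hδ₂, hR⟩ := hRcont ε₂ hε₂
  refine ⟨min δ₁ δ₂, lt_min hδ₁ hδ₂, fun z hz t ht htδ => ?_⟩
  have hM0 : 0 ≤ M := (norm_nonneg _).trans (hM z hz t₀ ht₀).1
  have hT : ‖J23.comp (R2 z t₀)‖ ≤ ‖J23‖ * M :=
    (opNorm_comp_le _ _).trans (by gcongr; exact (hM z hz t₀ ht₀).2.2.1)
  have hS : ‖J01.comp (R0 z t)‖ ≤ ‖J01‖ * M :=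
    (opNorm_comp_le _ _).trans (by gcongr; exact (hM z hz t ht).1)
  have hΔQ := hQ (show dist t t₀ < δ₁ by rw [Real.dist_eq]; exact htδ.trans_le (min_le_left _ _))
  rw [Real.norm_eq_abs] at hΔQ
  rw [comp_resolvent_sub_comp_resolvent hinv3 hQc1 hQc2 hRc0 hRc1 hRc2 hz ht ht₀,
    ← comp_smul, ← smul_comp]
  calc _ ≤ _ := norm_comp_comp_sub_comp_comp_le _ _ _ _ _
    _ ≤ ‖J23‖ * M * (ε₁ * |t - t₀| * (‖J01‖ * M) + |t - t₀| * ‖Q12' t₀‖ * ε₂) := by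
        rw [norm_smul, Real.norm_eq_abs]
        gcongr
        exact hR z hz t ht (htδ.trans_le (min_le_right _ _))
    _ = |t - t₀| * (‖J23‖ * M * (‖J01‖ * M) * ε₁ + ‖J23‖ * M * ‖Q12' t₀‖ * ε₂) := by ring
    _ ≤ ε * |t - t₀| := by rw [mul_comm ε]; gcongr; linarith

/-- Differentiability of the resolvent `t ↦ R_z(t) = (z − Q(t))⁻¹` viewed in `L(B, B̃)`,
along a chain of Banach spaces `B = B₀ ↪ B₁ ↪ B₂ ↪ B₃ = B̃` (embeddings `J01, J12, J23`).
The operators `Q(t)` and `R_z(t)` act compatibly on each level; `‖R_z(t)‖` is uniformly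
bounded on each level, `Q(·)` is `C¹` from a neighbourhood of `t₀` into `L(B₁,B₂)`,
continuous into `L(B₂,B₃)`, and `R_z(·)` is continuous into `L(B₀,B₁)` uniformly in
`z ∈ D`.  Then `t ↦ R_z(t) ∈ L(B₀,B₃)` is differentiable at `t₀` with derivative
`R_z(t₀) Q'(t₀) R_z(t₀)`, uniformly in `z ∈ D`. -/
theorem stmt11
    {B0 B1 B2 B3 : Type*}
    [NormedAddCommGroup B0] [NormedSpace ℂ B0] [CompleteSpace B0]
    [NormedAddCommGroup B1] [NormedSpace ℂ B1] [CompleteSpace B1]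
    [NormedAddCommGroup B2] [NormedSpace ℂ B2] [CompleteSpace B2]
    [NormedAddCommGroup B3] [NormedSpace ℂ B3] [CompleteSpace B3]
    (J01 : B0 →L[ℂ] B1) (J12 : B1 →L[ℂ] B2) (J23 : B2 →L[ℂ] B3)
    (U : Set ℝ) (hU : IsOpen U) (t₀ : ℝ) (ht₀ : t₀ ∈ U) (D : Set ℂ)
    (Qe0 : ℝ → B0 →L[ℂ] B0) (Qe1 : ℝ → B1 →L[ℂ] B1)
    (Qe2 : ℝ → B2 →L[ℂ] B2) (Qe3 : ℝ → B3 →L[ℂ] B3)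
    (R0 : ℂ → ℝ → B0 →L[ℂ] B0) (R1 : ℂ → ℝ → B1 →L[ℂ] B1)
    (R2 : ℂ → ℝ → B2 →L[ℂ] B2) (R3 : ℂ → ℝ → B3 →L[ℂ] B3)
    -- `R_z(t)` is the inverse of `z − Q(t)` on each level
    (hinv0 : ∀ z ∈ D, ∀ t ∈ U, (z • (1 : B0 →L[ℂ] B0) - Qe0 t) * R0 z t = 1 ∧
      R0 z t * (z • (1 : B0 →L[ℂ] B0) - Qe0 t) = 1)
    (hinv1 : ∀ z ∈ D, ∀ t ∈ U, (z • (1 : B1 →L[ℂ] B1) - Qe1 t) * R1 z t = 1 ∧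
      R1 z t * (z • (1 : B1 →L[ℂ] B1) - Qe1 t) = 1)
    (hinv2 : ∀ z ∈ D, ∀ t ∈ U, (z • (1 : B2 →L[ℂ] B2) - Qe2 t) * R2 z t = 1 ∧
      R2 z t * (z • (1 : B2 →L[ℂ] B2) - Qe2 t) = 1)
    (hinv3 : ∀ z ∈ D, ∀ t ∈ U, (z • (1 : B3 →L[ℂ] B3) - Qe3 t) * R3 z t = 1 ∧
      R3 z t * (z • (1 : B3 →L[ℂ] B3) - Qe3 t) = 1)
    -- compatibility of `Q(t)` and `R_z(t)` with the embeddings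
    (hQc0 : ∀ t ∈ U, J01.comp (Qe0 t) = (Qe1 t).comp J01)
    (hQc1 : ∀ t ∈ U, J12.comp (Qe1 t) = (Qe2 t).comp J12)
    (hQc2 : ∀ t ∈ U, J23.comp (Qe2 t) = (Qe3 t).comp J23)
    (hRc0 : ∀ z ∈ D, ∀ t ∈ U, J01.comp (R0 z t) = (R1 z t).comp J01)
    (hRc1 : ∀ z ∈ D, ∀ t ∈ U, J12.comp (R1 z t) = (R2 z t).comp J12)
    (hRc2 : ∀ z ∈ D, ∀ t ∈ U, J23.comp (R2 z t) = (R3 z t).comp J23)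
    -- uniform bounds for the resolvents
    (M : ℝ)
    (hM : ∀ z ∈ D, ∀ t ∈ U, ‖R0 z t‖ ≤ M ∧ ‖R1 z t‖ ≤ M ∧ ‖R2 z t‖ ≤ M ∧ ‖R3 z t‖ ≤ M)
    -- `Q(·) ∈ C¹` from `U` into `L(B₁,B₂)`
    (Q12' : ℝ → B1 →L[ℂ] B2)
    (hQ12deriv : ∀ t ∈ U, HasDerivAt (fun s => J12.comp (Qe1 s)) (Q12' t) t)
    (hQ12'cont : ContinuousOn Q12' U)
    -- `Q(·)` continuous into `L(B₂,B₃)`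
    (hQ23cont : ContinuousOn (fun t => J23.comp (Qe2 t)) U)
    -- `R_z(·)` continuous into `L(B₀,B₁)` uniformly in `z ∈ D`
    (hRcont : ∀ ε > (0 : ℝ), ∃ δ > (0 : ℝ), ∀ z ∈ D, ∀ t ∈ U, |t - t₀| < δ →
      ‖J01.comp (R0 z t) - J01.comp (R0 z t₀)‖ ≤ ε) :
    ∀ ε > (0 : ℝ), ∃ δ > (0 : ℝ), ∀ z ∈ D, ∀ t ∈ U, |t - t₀| < δ →
      ‖(J23.comp (J12.comp J01)).comp (R0 z t) -
        (J23.comp (J12.comp J01)).comp (R0 z t₀) -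
        (t - t₀) •
          ((J23.comp (R2 z t₀)).comp ((Q12' t₀).comp (J01.comp (R0 z t₀))))‖ ≤
        ε * |t - t₀| :=
  stmt11_general J01 J12 J23 U t₀ ht₀ D Qe1 Qe2 Qe3 R0 R1 R2 R3 hinv3 hQc1 hQc2 hRc0 hRc1 hRc2 M hM
    Q12' hQ12deriv hRcont
end

section
/- Let G = {t ∈ ℝ^d : r(Q(t)) = 1} where for each t, r(Q(t)) ≤ 1, and suppose: (a) for every t ∈ G there exist λ_t ∈ ℂ with |λ_t| = 1, a π-full Q-absorbing set A_t, and a bounded function w_t with |w_t| a nonzero constant on A_t such that e^{i⟨t,ξ(y)⟩} w_t(y) = λ_t w_t(x) Q(x,dy)-a.s. for all x ∈ A_t; and (b) conversely, any t for which such (λ, A, w) exist satisfies r(Q(t)) ≥ 1. Then G is a subgroup of (ℝ^d, +): it contains 0, and if g₁, g₂ ∈ G then g₁ − g₂ ∈ G (witnessed by A = A_{g₁} ∩ A_{g₂}, λ = λ_{g₁} λ̄_{g₂}, w = w_{g₁} w̄_{g₂}). -/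
/-!
By (a) and (b), `G` is exactly the set of `t` admitting a witness. The trivial witness
`(1, E, 1)` serves `t = 0`, and witnesses for `g₁` and `g₂` combine into one for `g₁ - g₂`
by multiplying the first functional equation by the conjugate of the second on `A₁ ∩ A₂`.
-/

open MeasureTheory ProbabilityTheory
open scoped InnerProductSpace ENNReal

/-- The witness predicate: there exist `λ` with `|λ| = 1`, a `π`-full `Q`-absorbing set
`A`, and a bounded measurable `w` with `|w|` a nonzero constant on `A`, such that
`e^{i⟨t,ξ(y)⟩} w(y) = λ w(x)` for `Q(x,dy)`-a.e. `y`, for all `x ∈ A`. -/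
def ArithWitness {E : Type*} [MeasurableSpace E] {d : ℕ} (Q : Kernel E E)
    (π : Measure E) (ξ : E → EuclideanSpace ℝ (Fin d))
    (t : EuclideanSpace ℝ (Fin d)) : Prop :=
  ∃ (lam : ℂ) (A : Set E) (w : E → ℂ),
    ‖lam‖ = 1 ∧ MeasurableSet A ∧ π A = 1 ∧ (∀ a ∈ A, Q a A = 1) ∧
    Measurable w ∧ (∃ M : ℝ, ∀ x, ‖w x‖ ≤ M) ∧
    (∃ c : ℝ, 0 < c ∧ ∀ x ∈ A, ‖w x‖ = c) ∧
    ∀ x ∈ A, ∀ᵐ y ∂(Q x),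
      Complex.exp (Complex.I * (⟪t, ξ y⟫_ℝ : ℂ)) * w y = lam * w x

lemma prob_inter_eq_one {E : Type*} [MeasurableSpace E] (μ : Measure E)
    [IsProbabilityMeasure μ] {A B : Set E} (hA : MeasurableSet A) (hB : MeasurableSet B)
    (hμA : μ A = 1) (hμB : μ B = 1) : μ (A ∩ B) = 1 := by
  rw [← prob_compl_eq_zero_iff (hA.inter hB), Set.compl_inter]
  exact measure_union_null ((prob_compl_eq_zero_iff hA).2 hμA)
    ((prob_compl_eq_zero_iff hB).2 hμB)

lemma exp_I_inner_sub {F : Type*} [NormedAddCommGroup F] [InnerProductSpace ℝ F]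
    (g₁ g₂ v : F) :
    Complex.exp (Complex.I * (⟪g₁ - g₂, v⟫_ℝ : ℂ)) =
      Complex.exp (Complex.I * (⟪g₁, v⟫_ℝ : ℂ)) *
        starRingEnd ℂ (Complex.exp (Complex.I * (⟪g₂, v⟫_ℝ : ℂ))) := by
  rw [← Complex.exp_conj, ← Complex.exp_add, inner_sub_left]
  simp only [map_mul, Complex.conj_I, Complex.conj_ofReal]
  push_cast
  ring_nf

section ArithWitness

variable {E : Type*} [MeasurableSpace E] {d : ℕ} {Q : Kernel E E} {π : Measure E}
  {ξ : E → EuclideanSpace ℝ (Fin d)}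

lemma arithWitness_zero [IsMarkovKernel Q] [IsProbabilityMeasure π] :
    ArithWitness Q π ξ 0 :=
  ⟨1, Set.univ, fun _ => 1, by simp, MeasurableSet.univ, measure_univ,
    fun _ _ => measure_univ, measurable_const, ⟨1, by simp⟩, ⟨1, one_pos, by simp⟩,
    fun _ _ => Filter.Eventually.of_forall fun _ => by simp⟩

lemma ArithWitness.sub [IsMarkovKernel Q] [IsProbabilityMeasure π]
    {g₁ g₂ : EuclideanSpace ℝ (Fin d)} (h₁ : ArithWitness Q π ξ g₁)
    (h₂ : ArithWitness Q π ξ g₂) : ArithWitness Q π ξ (g₁ - g₂) := by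
  obtain ⟨l₁, A₁, w₁, hl₁, hA₁, hπA₁, hQA₁, hw₁, ⟨M₁, hM₁⟩, ⟨c₁, hc₁, hwc₁⟩, heq₁⟩ := h₁
  obtain ⟨l₂, A₂, w₂, hl₂, hA₂, hπA₂, hQA₂, hw₂, ⟨M₂, hM₂⟩, ⟨c₂, hc₂, hwc₂⟩, heq₂⟩ := h₂
  have norm_w (x : E) : ‖w₁ x * starRingEnd ℂ (w₂ x)‖ = ‖w₁ x‖ * ‖w₂ x‖ := by
    rw [norm_mul, RCLike.norm_conj]
  refine ⟨l₁ * starRingEnd ℂ l₂, A₁ ∩ A₂, fun x => w₁ x * starRingEnd ℂ (w₂ x),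
    by simp [hl₁, hl₂], hA₁.inter hA₂, prob_inter_eq_one π hA₁ hA₂ hπA₁ hπA₂,
    fun a ha => prob_inter_eq_one (Q a) hA₁ hA₂ (hQA₁ a ha.1) (hQA₂ a ha.2),
    hw₁.mul (Complex.continuous_conj.measurable.comp hw₂),
    ⟨max M₁ 0 * max M₂ 0, fun x => ?_⟩,
    ⟨c₁ * c₂, mul_pos hc₁ hc₂, fun x hx => by rw [norm_w, hwc₁ x hx.1, hwc₂ x hx.2]⟩,
    fun x hx => ?_⟩
  · rw [norm_w]
    exact mul_le_mul ((hM₁ x).trans (le_max_left _ _)) ((hM₂ x).trans (le_max_left _ _))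
      (norm_nonneg _) (le_max_right _ _)
  · filter_upwards [heq₁ x hx.1, heq₂ x hx.2] with y e₁ e₂
    calc Complex.exp (Complex.I * (⟪g₁ - g₂, ξ y⟫_ℝ : ℂ)) * (w₁ y * starRingEnd ℂ (w₂ y))
        = Complex.exp (Complex.I * (⟪g₁, ξ y⟫_ℝ : ℂ)) * w₁ y *
            starRingEnd ℂ (Complex.exp (Complex.I * (⟪g₂, ξ y⟫_ℝ : ℂ)) * w₂ y) := by
          rw [exp_I_inner_sub, map_mul]; ring
      _ = l₁ * starRingEnd ℂ l₂ * (w₁ x * starRingEnd ℂ (w₂ x)) := by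
          rw [e₁, e₂, map_mul]; ring

end ArithWitness

theorem stmt17_general {E : Type*} [MeasurableSpace E] {d : ℕ}
    (Q : Kernel E E) [IsMarkovKernel Q]
    (π : Measure E) [IsProbabilityMeasure π]
    (ξ : E → EuclideanSpace ℝ (Fin d))
    (r : EuclideanSpace ℝ (Fin d) → ℝ≥0∞)
    (hr1 : ∀ t, r t ≤ 1)
    (ha : ∀ t, r t = 1 → ArithWitness Q π ξ t)
    (hb : ∀ t, ArithWitness Q π ξ t → 1 ≤ r t) :
    (0 : EuclideanSpace ℝ (Fin d)) ∈ {t | r t = 1} ∧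
    ∀ g₁ g₂ : EuclideanSpace ℝ (Fin d),
      g₁ ∈ {t | r t = 1} → g₂ ∈ {t | r t = 1} → g₁ - g₂ ∈ {t | r t = 1} := by
  have hG (t) : r t = 1 ↔ ArithWitness Q π ξ t :=
    ⟨ha t, fun h => le_antisymm (hr1 t) (hb t h)⟩
  simp only [Set.mem_ofPred_eq, hG]
  exact ⟨arithWitness_zero, fun _ _ => ArithWitness.sub⟩

/-- If `r(Q(t)) ≤ 1` for all `t`, every `t` with `r(Q(t)) = 1` admits an arithmetic
witness, and conversely any `t` admitting a witness satisfies `r(Q(t)) ≥ 1`, then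
`G = {t : r(Q(t)) = 1}` is a subgroup of `(ℝ^d,+)`: it contains `0` and is closed
under differences. -/
theorem stmt17 {E : Type*} [MeasurableSpace E] {d : ℕ}
    (Q : Kernel E E) [IsMarkovKernel Q]
    (π : Measure E) [IsProbabilityMeasure π]
    (hinv : π.bind (fun x => Q x) = π)
    (ξ : E → EuclideanSpace ℝ (Fin d)) (hξ : Measurable ξ)
    (r : EuclideanSpace ℝ (Fin d) → ℝ≥0∞)
    (hr1 : ∀ t, r t ≤ 1)
    (ha : ∀ t, r t = 1 → ArithWitness Q π ξ t)
    (hb : ∀ t, ArithWitness Q π ξ t → 1 ≤ r t) :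
    (0 : EuclideanSpace ℝ (Fin d)) ∈ {t | r t = 1} ∧
    ∀ g₁ g₂ : EuclideanSpace ℝ (Fin d),
      g₁ ∈ {t | r t = 1} → g₂ ∈ {t | r t = 1} → g₁ - g₂ ∈ {t | r t = 1} :=
  stmt17_general Q π ξ r hr1 ha hb
end

section
/- Suppose λ : 𝒪 → ℂ (𝒪 a neighbourhood of 0 in ℝ) is three times continuously differentiable with λ(0) = 1, λ'(0) = 0, λ''(0) = −σ², λ'''(0) = −i m₃, and suppose for each n ≥ 1, E_π[e^{itSₙ}] = λ(t)ⁿ π(Π(t)1_E) + π(N(t)ⁿ1_E), where t ↦ π(Π(t)1_E) is C³ near 0 with value 1 and vanishing first derivative at 0, and t ↦ π(N(t)ⁿ1_E) is C³ near 0 with value 0 at t=0 and with all derivatives up to order 3 bounded uniformly in n by Cκ̃ⁿ for some κ̃ < 1. If additionally E_π[|Sₙ|³] < ∞ for every n, then |σ² − E_π[Sₙ²]/n| = O(1/n) and |m₃ − E_π[Sₙ³]/n| = O(1/n); in particular limₙ E_π[Sₙ²]/n = −λ''(0) and limₙ E_π[Sₙ³]/n = i λ'''(0). -/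
/-!
Differentiating the decomposition `k = 2, 3` times at `0` and reading off the left-hand side as
`I ^ k * E[Sₙ ^ k]` (derivatives of a characteristic function): because `λ` and `π(Π(·)1)` both
take the value `1` with vanishing derivative at `0`, Leibniz's rule collapses the `k`-th derivative
of `λⁿ π(Π(·)1)` at `0` to `n λ⁽ᵏ⁾(0) + π(Π(·)1)⁽ᵏ⁾(0)`. Hence `n σ² - E[Sₙ²]` and
`n m₃ - E[Sₙ³]` are bounded by the derivatives of `π(Π(·)1)` plus the uniform bound on those of
`π(N(·)ⁿ1)`, and dividing by `n` gives the rate.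
-/

open MeasureTheory Filter

section LeibnizAtOne

variable {𝕜 𝔸 : Type*} [NontriviallyNormedField 𝕜] [NormedCommRing 𝔸] [NormedAlgebra 𝕜 𝔸]
  {f g r : 𝕜 → 𝔸} {x : 𝕜} {k : ℕ}

theorem iteratedDeriv_mul_of_eq_one_of_deriv_eq_zero (hf : ContDiffAt 𝕜 3 f x)
    (hg : ContDiffAt 𝕜 3 g x) (hf0 : f x = 1) (hf1 : deriv f x = 0) (hg0 : g x = 1)
    (hg1 : deriv g x = 0) (hk0 : k ≠ 0) (hk3 : k ≤ 3) :
    iteratedDeriv k (f * g) x = iteratedDeriv k f x + iteratedDeriv k g x := by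
  rw [iteratedDeriv_mul (hf.of_le (by exact_mod_cast hk3)) (hg.of_le (by exact_mod_cast hk3))]
  have hk1 : 1 ≤ k := Nat.one_le_iff_ne_zero.mpr hk0
  interval_cases k <;> simp [Finset.sum_range_succ, hf0, hf1, hg0, hg1, add_comm]

theorem iteratedDeriv_pow_of_eq_one_of_deriv_eq_zero (hf : ContDiffAt 𝕜 3 f x)
    (hf0 : f x = 1) (hf1 : deriv f x = 0) (n : ℕ) (hk0 : k ≠ 0) (hk3 : k ≤ 3) :
    iteratedDeriv k (f ^ n) x = n • iteratedDeriv k f x := by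
  induction n generalizing k with
  | zero => simp [Pi.one_def, iteratedDeriv_const, hk0]
  | succ n ih =>
    have hfn1 : deriv (f ^ n) x = 0 := by
      simpa [hf1] using ih one_ne_zero (by norm_num)
    rw [pow_succ, iteratedDeriv_mul_of_eq_one_of_deriv_eq_zero (f := f ^ n) (hf.pow n) hf
      (by simp [hf0]) hfn1 hf0 hf1 hk0 hk3, ih hk0 hk3, succ_nsmul]

theorem iteratedDeriv_pow_mul_add_of_eq_one_of_deriv_eq_zero (hf : ContDiffAt 𝕜 3 f x)
    (hg : ContDiffAt 𝕜 3 g x) (hr : ContDiffAt 𝕜 3 r x)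
    (hf0 : f x = 1) (hf1 : deriv f x = 0) (hg0 : g x = 1) (hg1 : deriv g x = 0) (n : ℕ)
    (hk0 : k ≠ 0) (hk3 : k ≤ 3) :
    iteratedDeriv k (fun y => f y ^ n * g y + r y) x =
      n • iteratedDeriv k f x + iteratedDeriv k g x + iteratedDeriv k r x := by
  have hfn : ContDiffAt 𝕜 3 (f ^ n) x := hf.pow n
  have hfng : ContDiffAt 𝕜 3 (f ^ n * g) x := hfn.mul hg
  change iteratedDeriv k (f ^ n * g + r) x = _
  rw [iteratedDeriv_add (hfng.of_le (by exact_mod_cast hk3))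
    (hr.of_le (by exact_mod_cast hk3))]
  have hfn1 : deriv (f ^ n) x = 0 := by
    simpa [hf1] using iteratedDeriv_pow_of_eq_one_of_deriv_eq_zero hf hf0 hf1 n one_ne_zero
      (by norm_num)
  rw [iteratedDeriv_mul_of_eq_one_of_deriv_eq_zero hfn hg (by simp [hf0]) hfn1 hg0 hg1 hk0 hk3,
    iteratedDeriv_pow_of_eq_one_of_deriv_eq_zero hf hf0 hf1 n hk0 hk3]

end LeibnizAtOne

theorem iteratedDeriv_integral_cexp_mul_zero {Ω : Type*} [MeasurableSpace Ω] {P : Measure Ω}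
    [IsFiniteMeasure P] {X : Ω → ℝ} {k : ℕ} (hX : MemLp X k P) :
    iteratedDeriv k (fun t : ℝ => ∫ ω, Complex.exp (Complex.I * t * X ω) ∂P) 0 =
      Complex.I ^ k * ∫ ω, X ω ^ k ∂P := by
  have hXm : AEMeasurable X P := hX.aestronglyMeasurable.aemeasurable
  have hchar : (fun t : ℝ => ∫ ω, Complex.exp (Complex.I * t * X ω) ∂P) = charFun (P.map X) := by
    funext t
    rw [charFun_apply_real, integral_map hXm (by fun_prop)]
    simp only [mul_comm, mul_left_comm]
  have hXk : MemLp id k (P.map X) := (memLp_map_measure_iff aestronglyMeasurable_id hXm).2 hX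
  rw [hchar, iteratedDeriv_charFun_zero hXk, integral_map hXm (by fun_prop)]

theorem moment_eq_of_integral_cexp_eq_pow_mul_add {Ω : Type*} [MeasurableSpace Ω]
    {P : Measure Ω} [IsFiniteMeasure P] {X : Ω → ℝ} {f g r : ℝ → ℂ} {U : Set ℝ} {k n : ℕ}
    (hU : U ∈ nhds 0) (hX : MemLp X k P) (hf : ContDiffAt ℝ 3 f 0) (hg : ContDiffAt ℝ 3 g 0)
    (hr : ContDiffAt ℝ 3 r 0) (hf0 : f 0 = 1) (hf1 : deriv f 0 = 0) (hg0 : g 0 = 1)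
    (hg1 : deriv g 0 = 0)
    (hφ : ∀ t ∈ U, ∫ ω, Complex.exp (Complex.I * t * X ω) ∂P = f t ^ n * g t + r t)
    (hk0 : k ≠ 0) (hk3 : k ≤ 3) :
    Complex.I ^ k * ((∫ ω, X ω ^ k ∂P : ℝ) : ℂ) =
      n • iteratedDeriv k f 0 + iteratedDeriv k g 0 + iteratedDeriv k r 0 := by
  rw [← iteratedDeriv_integral_cexp_mul_zero hX,
    Filter.EventuallyEq.iteratedDeriv_eq k (eventually_of_mem hU hφ)]
  exact iteratedDeriv_pow_mul_add_of_eq_one_of_deriv_eq_zero hf hg hr hf0 hf1 hg0 hg1 n hk0 hk3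

theorem abs_sub_div_le_of_abs_mul_sub_le {a b c C : ℝ} (hc : 0 < c) (h : |c * a - b| ≤ C) :
    |a - b / c| ≤ C / c := by
  rw [show a - b / c = (c * a - b) / c by field_simp, abs_div, abs_of_pos hc]
  exact div_le_div_of_nonneg_right h hc.le

theorem tendsto_of_abs_sub_le_div {a C : ℝ} {b : ℕ → ℝ} (h : ∀ n : ℕ, 1 ≤ n → |a - b n| ≤ C / n) :
    Tendsto b atTop (nhds a) := by
  rw [tendsto_iff_norm_sub_tendsto_zero]
  refine squeeze_zero' (Eventually.of_forall fun n => norm_nonneg _) ?_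
    (tendsto_const_div_atTop_nhds_zero_nat C)
  filter_upwards [eventually_ge_atTop 1] with n hn
  rw [Real.norm_eq_abs, abs_sub_comm]
  exact h n hn

theorem abs_le_norm_add_norm_of_mul_ofReal_eq {u p q : ℂ} {r : ℝ} (hu : ‖u‖ = 1)
    (h : u * r = p + q) : |r| ≤ ‖p‖ + ‖q‖ :=
  calc |r| = ‖u * r‖ := by rw [norm_mul, hu, one_mul, Complex.norm_real, Real.norm_eq_abs]
    _ = ‖p + q‖ := by rw [h]
    _ ≤ ‖p‖ + ‖q‖ := norm_add_le p q

theorem stmt18_general {Ω : Type*} [MeasurableSpace Ω] (P : Measure Ω) [IsProbabilityMeasure P]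
    (S : ℕ → Ω → ℝ) (hS3 : ∀ n, MemLp (S n) 3 P)
    (Lam Pi1 : ℝ → ℂ) (N : ℕ → ℝ → ℂ)
    (U : Set ℝ) (hUopen : IsOpen U) (hU0 : (0 : ℝ) ∈ U)
    (σ2 m3 : ℝ)
    (hLamC3 : ContDiffOn ℝ 3 Lam U)
    (hLam0 : Lam 0 = 1) (hLam1 : deriv Lam 0 = 0)
    (hLam2 : iteratedDeriv 2 Lam 0 = -(σ2 : ℂ))
    (hLam3 : iteratedDeriv 3 Lam 0 = -(Complex.I * (m3 : ℂ)))
    (hPiC3 : ContDiffOn ℝ 3 Pi1 U) (hPi0 : Pi1 0 = 1) (hPi1 : deriv Pi1 0 = 0)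
    (hNC3 : ∀ n, ContDiffOn ℝ 3 (N n) U)
    (hNbdd : ∃ (C κ : ℝ), 0 ≤ κ ∧ κ < 1 ∧ ∀ n : ℕ, ∀ t ∈ U, ∀ j : ℕ, j ≤ 3 →
      ‖iteratedDeriv j (N n) t‖ ≤ C * κ ^ n)
    (hdecomp : ∀ n : ℕ, 1 ≤ n → ∀ t ∈ U,
      (∫ ω, Complex.exp (Complex.I * (t : ℂ) * (S n ω : ℂ)) ∂P) =
        Lam t ^ n * Pi1 t + N n t) :
    (∃ C : ℝ, ∀ n : ℕ, 1 ≤ n →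
      |σ2 - (∫ ω, (S n ω) ^ 2 ∂P) / n| ≤ C / n ∧
      |m3 - (∫ ω, (S n ω) ^ 3 ∂P) / n| ≤ C / n) ∧
    Tendsto (fun n : ℕ => (∫ ω, (S n ω) ^ 2 ∂P) / n) atTop (nhds σ2) ∧
    Tendsto (fun n : ℕ => (∫ ω, (S n ω) ^ 3 ∂P) / n) atTop (nhds m3) := by
  obtain ⟨C, κ, hκ0, hκ1, hNb⟩ := hNbdd
  have hU : U ∈ nhds (0 : ℝ) := hUopen.mem_nhds hU0
  have hNb0 (n : ℕ) (j : ℕ) (hj : j ≤ 3) : ‖iteratedDeriv j (N n) 0‖ ≤ max C 0 :=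
    (hNb n 0 hU0 j hj).trans <|
      (mul_le_mul_of_nonneg_right (le_max_left C 0) (pow_nonneg hκ0 n)).trans
        (mul_le_of_le_one_right (le_max_right C 0) (pow_le_one₀ hκ0 hκ1.le))
  have hmoment (n : ℕ) (hn : 1 ≤ n) (k : ℕ) (hk0 : k ≠ 0) (hk3 : k ≤ 3) :=
    moment_eq_of_integral_cexp_eq_pow_mul_add hU ((hS3 n).mono_exponent (by exact_mod_cast hk3))
      (hLamC3.contDiffAt hU) (hPiC3.contDiffAt hU) ((hNC3 n).contDiffAt hU) hLam0 hLam1 hPi0 hPi1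
      (hdecomp n hn) hk0 hk3
  set B := ‖iteratedDeriv 2 Pi1 0‖ + ‖iteratedDeriv 3 Pi1 0‖ + max C 0
  have hvar (n : ℕ) (hn : 1 ≤ n) : |n * σ2 - ∫ ω, S n ω ^ 2 ∂P| ≤ B := by
    have e := hmoment n hn 2 two_ne_zero (by norm_num)
    rw [hLam2, Complex.I_sq, nsmul_eq_mul] at e
    have := abs_le_norm_add_norm_of_mul_ofReal_eq (r := n * σ2 - ∫ ω, S n ω ^ 2 ∂P)
      (p := iteratedDeriv 2 Pi1 0) (q := iteratedDeriv 2 (N n) 0) norm_one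
      (by push_cast; linear_combination e)
    linarith [hNb0 n 2 (by norm_num), norm_nonneg (iteratedDeriv 3 Pi1 0)]
  have hthird (n : ℕ) (hn : 1 ≤ n) : |n * m3 - ∫ ω, S n ω ^ 3 ∂P| ≤ B := by
    have e := hmoment n hn 3 three_ne_zero le_rfl
    rw [hLam3, pow_succ, Complex.I_sq, nsmul_eq_mul] at e
    have := abs_le_norm_add_norm_of_mul_ofReal_eq (r := n * m3 - ∫ ω, S n ω ^ 3 ∂P)
      (p := iteratedDeriv 3 Pi1 0) (q := iteratedDeriv 3 (N n) 0) Complex.norm_I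
      (by push_cast; linear_combination e)
    linarith [hNb0 n 3 le_rfl, norm_nonneg (iteratedDeriv 2 Pi1 0)]
  have hrate (n : ℕ) (hn : 1 ≤ n) :
      |σ2 - (∫ ω, S n ω ^ 2 ∂P) / n| ≤ B / n ∧ |m3 - (∫ ω, S n ω ^ 3 ∂P) / n| ≤ B / n := by
    have hn0 : (0 : ℝ) < n := by exact_mod_cast hn
    exact ⟨abs_sub_div_le_of_abs_mul_sub_le hn0 (hvar n hn),
      abs_sub_div_le_of_abs_mul_sub_le hn0 (hthird n hn)⟩
  exact ⟨⟨B, hrate⟩, tendsto_of_abs_sub_le_div fun n hn => (hrate n hn).1,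
    tendsto_of_abs_sub_le_div fun n hn => (hrate n hn).2⟩

/-- If the characteristic functions decompose as
`E[e^{itSₙ}] = λ(t)ⁿ π(Π(t)1) + π(N(t)ⁿ1)` near `0`, with `λ` C³, `λ(0)=1`, `λ'(0)=0`,
`λ''(0) = −σ²`, `λ'''(0) = −im₃`, `π(Π(·)1)` C³ with value `1` and vanishing derivative
at `0`, and `π(N(·)ⁿ1)` C³, vanishing at `0`, with derivatives up to order 3 bounded by
`Cκ̃ⁿ` (`κ̃ < 1`), and `E[|Sₙ|³] < ∞`, then `|σ² − E[Sₙ²]/n| = O(1/n)` and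
`|m₃ − E[Sₙ³]/n| = O(1/n)`; in particular `E[Sₙ²]/n → −λ''(0)` and `E[Sₙ³]/n → iλ'''(0)`. -/
theorem stmt18 {Ω : Type*} [MeasurableSpace Ω] (P : Measure Ω) [IsProbabilityMeasure P]
    (S : ℕ → Ω → ℝ) (hS3 : ∀ n, MemLp (S n) 3 P)
    (Lam Pi1 : ℝ → ℂ) (N : ℕ → ℝ → ℂ)
    (U : Set ℝ) (hUopen : IsOpen U) (hU0 : (0 : ℝ) ∈ U)
    (σ2 m3 : ℝ)
    (hLamC3 : ContDiffOn ℝ 3 Lam U)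
    (hLam0 : Lam 0 = 1) (hLam1 : deriv Lam 0 = 0)
    (hLam2 : iteratedDeriv 2 Lam 0 = -(σ2 : ℂ))
    (hLam3 : iteratedDeriv 3 Lam 0 = -(Complex.I * (m3 : ℂ)))
    (hPiC3 : ContDiffOn ℝ 3 Pi1 U) (hPi0 : Pi1 0 = 1) (hPi1 : deriv Pi1 0 = 0)
    (hNC3 : ∀ n, ContDiffOn ℝ 3 (N n) U) (hN0 : ∀ n, N n 0 = 0)
    (hNbdd : ∃ (C κ : ℝ), 0 ≤ κ ∧ κ < 1 ∧ ∀ n : ℕ, ∀ t ∈ U, ∀ j : ℕ, j ≤ 3 →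
      ‖iteratedDeriv j (N n) t‖ ≤ C * κ ^ n)
    (hdecomp : ∀ n : ℕ, 1 ≤ n → ∀ t ∈ U,
      (∫ ω, Complex.exp (Complex.I * (t : ℂ) * (S n ω : ℂ)) ∂P) =
        Lam t ^ n * Pi1 t + N n t) :
    (∃ C : ℝ, ∀ n : ℕ, 1 ≤ n →
      |σ2 - (∫ ω, (S n ω) ^ 2 ∂P) / n| ≤ C / n ∧
      |m3 - (∫ ω, (S n ω) ^ 3 ∂P) / n| ≤ C / n) ∧
    Tendsto (fun n : ℕ => (∫ ω, (S n ω) ^ 2 ∂P) / n) atTop (nhds σ2) ∧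
    Tendsto (fun n : ℕ => (∫ ω, (S n ω) ^ 3 ∂P) / n) atTop (nhds m3) :=
  stmt18_general P S hS3 Lam Pi1 N U hUopen hU0 σ2 m3 hLamC3 hLam0 hLam1 hLam2 hLam3 hPiC3 hPi0 hPi1
    hNC3 hNbdd hdecomp
end
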